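/- arXiv:2005.06747 — 7 statements merged into one kernel-verified Lean document; each statement's English description precedes it below -/
import Mathlib

section
/- Let x_j = a + j·h be a uniform grid and let p_k^r denote the Lagrange interpolating polynomial of degree ≤ r of f at nodes {x_{i-r+k}, ..., x_{i+k}}, for k = 0, ..., r-1, and let p_0^{2r-1} denote the Lagrange interpolating polynomial of f at all 2r nodes {x_{i-r}, ..., x_{i+r-1}}. Then at the midpoint x_{i-1/2}, p_0^{2r-1}(x_{i-1/2}) = ∑_{k=0}^{r-1} C̄_k^r · p_k^r(x_{i-1/2}), where C̄_k^r = binom(2r, 2k+1)/2^(2r-1). -/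
/-!
Neville's recursion on the grid `x_j = a + j h` writes the interpolant on `x_c, …, x_d`, evaluated
at `a + t h`, as `((t - c) · I[c+1, d] + (d - t) · I[c, d-1]) / (d - c)`. Iterating it `r - 1`
times from the `2r`-point stencil, every path that drops `p` nodes on the left and `q` on the right
carries the same weight `(t - c)_p (d - t)_q / (d - c)_(r-1)` (falling factorials), so the
sub-stencil starting at `i - r + k` receives `binom(r-1, k) (r-1/2)_k (r-1/2)_(r-1-k) / (2r-1)_(r-1)`:
the midpoint lies at distance `r - 1/2` from both ends of the big stencil. Expressing the
half-integer falling factorials through factorials turns this into `binom(2r, 2k+1) / 2^(2r-1)`.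
-/

open Lagrange Polynomial Finset
open scoped Nat

theorem eval_interpolate_Icc_uniform_neville {K : Type*} [Field K] [CharZero K] {a h : K}
    (hh : h ≠ 0) (g : ℤ → K) (t : K) {c d : ℤ} (hcd : c < d) :
    ((d : K) - c) * (interpolate (Icc c d) (fun j : ℤ => a + j * h) g).eval (a + t * h) =
      (t - c) * (interpolate (Icc (c + 1) d) (fun j : ℤ => a + j * h) g).eval (a + t * h) +
        (d - t) * (interpolate (Icc c (d - 1)) (fun j : ℤ => a + j * h) g).eval (a + t * h) := by
  have hinj : Set.InjOn (fun j : ℤ => a + j * h) (Icc c d) := fun j _ k _ hjk => by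
    simpa [hh] using hjk
  have hdc : (d : K) - c ≠ 0 := sub_ne_zero.mpr (by exact_mod_cast hcd.ne')
  have hcd' : (c : K) - d ≠ 0 := sub_ne_zero.mpr (by exact_mod_cast hcd.ne)
  rw [interpolate_eq_add_interpolate_erase g hinj (left_mem_Icc.mpr hcd.le)
    (right_mem_Icc.mpr hcd.le) hcd.ne, Icc_erase_right, Icc_erase_left,
    ← Icc_sub_one_right_eq_Ico, ← Icc_add_one_left_eq_Ioc]
  simp only [basisDivisor, eval_add, eval_mul, eval_C, eval_sub, eval_X,
    show ∀ u v : K, a + u * h - (a + v * h) = (u - v) * h from fun _ _ => by ring]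
  field_simp
  ring

/-- For `P = 1` this is the Chu–Vandermonde identity. -/
theorem descPochhammer_eval_add_mul_eq_sum_antidiagonal {R : Type*} [CommRing R]
    (P : ℕ → ℕ → R) (x y : R) {L : ℕ}
    (hP : ∀ p q, p + q < L →
      (x + y - (p + q)) * P p q = (x - p) * P (p + 1) q + (y - q) * P p (q + 1))
    {M : ℕ} (hM : M ≤ L) :
    (descPochhammer R M).eval (x + y) * P 0 0 =
      ∑ pq ∈ antidiagonal M, (M.choose pq.1 : R) * (descPochhammer R pq.1).eval x *
        (descPochhammer R pq.2).eval y * P pq.1 pq.2 := by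
  induction M with
  | zero => simp
  | succ M ih =>
    have step : ∀ pq ∈ antidiagonal M, (M.choose pq.1 : R) * (descPochhammer R pq.1).eval x *
        (descPochhammer R pq.2).eval y * P pq.1 pq.2 * (x + y - M) =
        (M.choose pq.1 : R) * ((descPochhammer R pq.1).eval x *
          (descPochhammer R (pq.2 + 1)).eval y * P pq.1 (pq.2 + 1)) +
        (M.choose pq.2 : R) * ((descPochhammer R (pq.1 + 1)).eval x *
          (descPochhammer R pq.2).eval y * P (pq.1 + 1) pq.2) := by
      rintro ⟨p, q⟩ hpq
      rw [HasAntidiagonal.mem_antidiagonal] at hpq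
      subst hpq
      rw [← Nat.choose_symm_add]
      simp only [descPochhammer_succ_eval, Nat.cast_add]
      linear_combination ((p + q).choose p : R) * (descPochhammer R p).eval x *
        (descPochhammer R q).eval y * hP p q (by omega)
    rw [descPochhammer_succ_eval, mul_right_comm, ih (by omega), sum_mul, sum_congr rfl step,
      sum_add_distrib, ← sum_antidiagonal_choose_succ_mul
        (fun p q => (descPochhammer R p).eval x * (descPochhammer R q).eval y * P p q)]
    simp only [mul_assoc]

theorem eval_interpolate_Icc_uniform_neville_iterate {K : Type*} [Field K] [CharZero K]
    {a h : K} (hh : h ≠ 0) (g : ℤ → K) (t : K) {c d : ℤ} {M : ℕ} (hM : (M : ℤ) ≤ d - c) :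
    (descPochhammer K M).eval ((d : K) - c) *
        (interpolate (Icc c d) (fun j : ℤ => a + j * h) g).eval (a + t * h) =
      ∑ pq ∈ antidiagonal M, (M.choose pq.1 : K) * (descPochhammer K pq.1).eval (t - c) *
        (descPochhammer K pq.2).eval (d - t) *
        (interpolate (Icc (c + pq.1) (d - pq.2)) (fun j : ℤ => a + j * h) g).eval (a + t * h) := by
  have hexp := descPochhammer_eval_add_mul_eq_sum_antidiagonal
    (fun p q : ℕ => (interpolate (Icc (c + p) (d - q)) (fun j : ℤ => a + j * h) g).eval (a + t * h))
    (t - c) (d - t) (L := (d - c).toNat) ?_ (M := M) (by omega)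
  · rw [show t - c + (d - t) = (d : K) - c by ring] at hexp
    simpa using hexp
  · intro p q hpq
    have key := eval_interpolate_Icc_uniform_neville (a := a) hh g t (c := c + p) (d := d - q) (by omega)
    rw [show c + p + 1 = c + (p + 1 : ℕ) by push_cast; ring,
      show d - q - 1 = d - (q + 1 : ℕ) by push_cast; ring] at key
    push_cast at key ⊢
    linear_combination key

theorem descPochhammer_eval_nat_sub_half {K : Type*} [Field K] [CharZero K] (s k : ℕ) :
    (descPochhammer K k).eval ((s + k : ℕ) - 1 / 2 : K) =
      (2 * (s + k))! * s ! / (4 ^ k * (s + k)! * (2 * s)!) := by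
  rw [eq_div_iff (by simp [Nat.factorial_ne_zero])]
  induction k with
  | zero => simp [mul_comm]
  | succ k ih =>
    have hshift : ((s + (k + 1) : ℕ) - 1 / 2 - 1 : K) = (s + k : ℕ) - 1 / 2 := by push_cast; ring
    rw [descPochhammer_succ_left, eval_mul, eval_X, eval_comp, eval_sub, eval_X, eval_one, hshift,
      show 2 * (s + (k + 1)) = 2 * (s + k) + 1 + 1 by ring, Nat.factorial_succ, Nat.factorial_succ,
      ← add_assoc, Nat.factorial_succ (s + k)]
    push_cast at ih ⊢
    linear_combination (2 * ((s : K) + k + 1) * (2 * s + 2 * k + 1)) * ih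

theorem choose_mul_descPochhammer_eval_sub_half_div {K : Type*} [Field K] [CharZero K] {r k : ℕ}
    (hk : k < r) :
    ((r - 1).choose k : K) * (descPochhammer K k).eval ((r : K) - 1 / 2) *
        (descPochhammer K (r - 1 - k)).eval ((r : K) - 1 / 2) /
        (descPochhammer K (r - 1)).eval (2 * r - 1 : K) =
      (2 * r).choose (2 * k + 1) / 2 ^ (2 * r - 1) := by
  obtain ⟨l, rfl⟩ : ∃ l, r = k + l + 1 := ⟨r - k - 1, by omega⟩
  have hE : ((2 * (k + l) + 1).descFactorial (k + l) : K) = (2 * (k + l) + 1)! / (k + l + 1)! := by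
    have h := Nat.factorial_mul_descFactorial (show k + l ≤ 2 * (k + l) + 1 by omega)
    rw [show 2 * (k + l) + 1 - (k + l) = k + l + 1 by omega] at h
    rw [eq_div_iff (by simp [Nat.factorial_ne_zero]), mul_comm]
    exact_mod_cast h
  have hDk := descPochhammer_eval_nat_sub_half (K := K) (l + 1) k
  have hDl := descPochhammer_eval_nat_sub_half (K := K) (k + 1) l
  rw [show l + 1 + k = k + l + 1 by ring] at hDk
  rw [show k + 1 + l = k + l + 1 by ring] at hDl
  rw [show k + l + 1 - 1 - k = l by omega, show k + l + 1 - 1 = k + l by omega,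
    show (2 * ((k + l + 1 : ℕ) : K) - 1) = (2 * (k + l) + 1 : ℕ) by push_cast; ring,
    descPochhammer_eval_eq_descFactorial, show 2 * (k + l + 1) - 1 = 2 * (k + l) + 1 by omega,
    Nat.cast_choose K (show k ≤ k + l by omega),
    Nat.cast_choose K (show 2 * k + 1 ≤ 2 * (k + l + 1) by omega),
    show k + l - k = l by omega, show 2 * (k + l + 1) - (2 * k + 1) = 2 * l + 1 by omega,
    hDk, hDl, hE]
  have fact_succ : ∀ n : ℕ, ((n + 1)! : K) = ((n + 1 : ℕ) : K) * n ! := fun n => by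
    rw [Nat.factorial_succ, Nat.cast_mul]
  rw [show 2 * (l + 1) = 2 * l + 1 + 1 by ring, show 2 * (k + 1) = 2 * k + 1 + 1 by ring,
    show 2 * (k + l + 1) = 2 * (k + l) + 1 + 1 by ring,
    show (2 : K) ^ (2 * (k + l) + 1) = 4 ^ k * 4 ^ l * 2 by
      rw [pow_succ, pow_mul, pow_add]; norm_num,
    fact_succ (2 * l + 1), fact_succ (2 * k + 1), fact_succ l, fact_succ k,
    fact_succ (2 * (k + l) + 1), fact_succ (k + l)]
  field_simp
  rw [div_eq_div_iff (by norm_cast; positivity) (by norm_cast; positivity)]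
  push_cast
  ring

/-- Fundamental WENO-2r identity: on a uniform grid `x_j = a + j h`, the Lagrange
interpolant of `f` on the `2r` nodes `{x_{i-r}, …, x_{i+r-1}}` evaluated at the midpoint
`x_{i-1/2}` equals the convex combination of the `r` interpolants of degree `r` on the
sub-stencils `{x_{i-r+k}, …, x_{i+k}}` with binomial weights `C̄_k^r = binom(2r,2k+1)/2^(2r-1)`. -/
theorem weno_midpoint_convex_combination (a h : ℝ) (hh : 0 < h) (r : ℕ) (hr : 1 ≤ r)
    (i : ℤ) (f : ℝ → ℝ) :
    let x : ℤ → ℝ := fun j => a + (j : ℝ) * h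
    let m : ℝ := a + ((i : ℝ) - 1 / 2) * h
    (Lagrange.interpolate (Finset.Icc (i - r) (i + r - 1)) x (fun j => f (x j))).eval m
      = ∑ k ∈ Finset.range r,
          ((Nat.choose (2 * r) (2 * k + 1) : ℝ) / 2 ^ (2 * r - 1))
            * (Lagrange.interpolate (Finset.Icc (i - r + k) (i + k)) x
                (fun j => f (x j))).eval m := by
  dsimp only
  have hexp := eval_interpolate_Icc_uniform_neville_iterate (a := a) hh.ne'
    (fun j => f (a + j * h)) ((i : ℝ) - 1 / 2) (c := i - r) (d := i + r - 1) (M := r - 1)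
    (by omega)
  have hE : (descPochhammer ℝ (r - 1)).eval (2 * r - 1 : ℝ) ≠ 0 := by
    rw [show (2 * r - 1 : ℝ) = (2 * r - 1 : ℕ) by rw [Nat.cast_sub (by omega)]; push_cast; ring,
      descPochhammer_eval_eq_descFactorial, Nat.cast_ne_zero, ne_eq,
      Nat.descFactorial_eq_zero_iff_lt]
    omega
  rw [show ((i + r - 1 : ℤ) : ℝ) - (i - r : ℤ) = 2 * r - 1 by push_cast; ring,
    show (i : ℝ) - 1 / 2 - (i - r : ℤ) = r - 1 / 2 by push_cast; ring,
    show ((i + r - 1 : ℤ) : ℝ) - (i - 1 / 2) = r - 1 / 2 by push_cast; ring,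
    mul_comm, ← eq_div_iff hE, Nat.sum_antidiagonal_eq_sum_range_succ_mk, Nat.succ_eq_add_one,
    Nat.sub_add_cancel hr, sum_div] at hexp
  rw [hexp]
  refine sum_congr rfl fun k hk => ?_
  have hkr := mem_range.mp hk
  rw [← choose_mul_descPochhammer_eval_sub_half_div hkr,
    show i + r - 1 - (r - 1 - k : ℕ) = i + k by omega]
  ring
end

section
/- Let r ≥ 2 and define, for r ≤ l ≤ 2r-2 and valid indices, C_{k,k}^l = (2(l-r+k+1)+1)/(2(l+1)) and C_{k,k+1}^l = (2(r-k)-1)/(2(l+1)). Then the iterated dyadic combination ∑_{j_0=0}^1 C_{0,j_0}^{2r-2} ∑_{j_1=j_0}^{j_0+1} C_{j_0,j_1}^{2r-3} ⋯ ∑_{j_{r-1}=j_{r-2}}^{j_{r-2}+1} C_{j_{r-2},j_{r-1}}^r · e_{j_{r-1}} equals the vector (C̄_0^r, ..., C̄_{r-1}^r) with C̄_k^r = binom(2r,2k+1)/2^(2r-1), where e_j denotes the j-th standard basis vector of ℝ^r. -/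
/-!
Group the paths by their last step. After clearing the common denominator `2(2r-1-s)` of the
weights at step `s`, the numerator path sums satisfy a Pascal-type recursion, which is solved by
`choose m k * P k * P (m - k)` with `P k = ∏_{i<k} (2r-1-2i)`: indeed every path with `k` up-steps
and `m - k` stays carries exactly this numerator. At the root level `m = r - 1`, writing `P` as a
quotient of odd double factorials turns this into `choose (2r) (2k+1) / 2^(2r-1)`.
-/

open Finset

section LatticePath

variable {R : Type*} {m r : ℕ}

/-- The path that starts at `0` and then visits `j 0, …, j (m - 1)`. -/
def pathVertices (j : Fin m → Fin r) : Fin (m + 1) → ℕ :=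
  Fin.cons (0 : ℕ) fun s => (j s : ℕ)

def IsUnitStepSeq (v : Fin (m + 1) → ℕ) : Prop :=
  ∀ s : Fin m, v s.succ = v s.castSucc ∨ v s.succ = v s.castSucc + 1

instance : DecidablePred (IsUnitStepSeq (m := m)) :=
  fun _ => Fintype.decidableForallFintype

def seqWeight [CommMonoid R] (w : ℕ → ℕ → ℕ → R) (v : Fin (m + 1) → ℕ) : R :=
  ∏ s : Fin m, w s (v s.castSucc) (v s.succ)

def pathSum [CommSemiring R] (w : ℕ → ℕ → ℕ → R) (m r k : ℕ) : R :=
  ∑ j ∈ univ.filter (fun j : Fin m → Fin r =>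
      IsUnitStepSeq (pathVertices j) ∧ pathVertices j (Fin.last m) = k),
    seqWeight w (pathVertices j)

@[simp]
theorem pathVertices_succ (j : Fin m → Fin r) (s : Fin m) : pathVertices j s.succ = j s :=
  Fin.cons_succ _ _ _

theorem pathVertices_castSucc (j : Fin m → Fin r) (s : Fin m) :
    pathVertices j s.castSucc =
      if (s : ℕ) = 0 then 0 else (j ⟨s - 1, Nat.lt_of_le_of_lt (Nat.sub_le _ _) s.isLt⟩ : ℕ) := by
  rcases s with ⟨_ | t, ht⟩
  · rfl
  · exact pathVertices_succ j ⟨t, by omega⟩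

theorem isUnitStepSeq_pathVertices_iff (hm : 0 < m) (j : Fin m → Fin r) :
    IsUnitStepSeq (pathVertices j) ↔ (j ⟨0, hm⟩ : ℕ) ≤ 1 ∧
      ∀ s s' : Fin m, (s' : ℕ) = s + 1 → (j s' : ℕ) = j s ∨ (j s' : ℕ) = j s + 1 := by
  simp only [IsUnitStepSeq, pathVertices_succ, pathVertices_castSucc]
  constructor
  · intro h
    refine ⟨by have h0 := h ⟨0, hm⟩; simp at h0; omega, fun s s' hs' => ?_⟩
    have hprev : (⟨s' - 1, by omega⟩ : Fin m) = s := Fin.ext (by simp only; omega)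
    simpa [hs', hprev] using h s'
  · rintro ⟨h0, h⟩ s
    split_ifs with hs
    · obtain rfl : s = ⟨0, hm⟩ := Fin.ext hs
      omega
    · exact h _ s (by simp only; omega)

theorem pathVertices_last_eq_iff (hm : 0 < m) (j : Fin m → Fin r) (k : ℕ) :
    pathVertices j (Fin.last m) = k ↔ ∀ s : Fin m, (s : ℕ) = m - 1 → (j s : ℕ) = k := by
  obtain ⟨n, rfl⟩ : ∃ n, m = n + 1 := ⟨m - 1, by omega⟩
  rw [← Fin.succ_last, pathVertices_succ]
  exact ⟨fun h s hs => by rwa [show s = Fin.last n from Fin.ext hs], fun h => h _ rfl⟩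

theorem pathVertices_snoc (j : Fin m → Fin r) (x : Fin r) :
    pathVertices (Fin.snoc j x : Fin (m + 1) → Fin r) = Fin.snoc (pathVertices j) (x : ℕ) := by
  change Fin.cons (0 : ℕ) (Fin.val ∘ Fin.snoc j x) =
    (Fin.snoc (Fin.cons (0 : ℕ) (Fin.val ∘ j) : Fin (m + 1) → ℕ) _ : Fin (m + 2) → ℕ)
  rw [Fin.comp_snoc, Fin.cons_snoc_eq_snoc_cons]

theorem isUnitStepSeq_snoc (v : Fin (m + 1) → ℕ) (x : ℕ) :
    IsUnitStepSeq (Fin.snoc v x : Fin (m + 2) → ℕ) ↔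
      IsUnitStepSeq v ∧ (x = v (Fin.last m) ∨ x = v (Fin.last m) + 1) := by
  simp [IsUnitStepSeq, Fin.forall_fin_succ' (n := m), Fin.succ_castSucc, -Fin.castSucc_succ]

theorem seqWeight_snoc [CommMonoid R] (w : ℕ → ℕ → ℕ → R) (v : Fin (m + 1) → ℕ) (x : ℕ) :
    seqWeight w (Fin.snoc v x : Fin (m + 2) → ℕ) = seqWeight w v * w m (v (Fin.last m)) x := by
  simp [seqWeight, Fin.prod_univ_castSucc (n := m), Fin.succ_castSucc, -Fin.castSucc_succ]

section

variable [CommSemiring R] (w : ℕ → ℕ → ℕ → R)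

@[simp]
theorem pathSum_zero (k : ℕ) : pathSum w 0 r k = if k = 0 then 1 else 0 := by
  split_ifs with hk <;> simp [pathSum, seqWeight, pathVertices, IsUnitStepSeq, eq_comm, hk]

theorem pathSum_succ {k : ℕ} (hk : k < r) :
    pathSum w (m + 1) r k =
      ∑ j ∈ univ.filter (fun j : Fin m → Fin r => IsUnitStepSeq (pathVertices j) ∧
          (k = pathVertices j (Fin.last m) ∨ k = pathVertices j (Fin.last m) + 1)),
        seqWeight w (pathVertices j) * w m (pathVertices j (Fin.last m)) k := by
  have snocEquiv_apply (x : Fin r) (j : Fin m → Fin r) :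
      Fin.snocEquiv (fun _ => Fin r) (x, j) = Fin.snoc j x := rfl
  rw [pathSum, sum_filter, sum_filter, ← (Fin.snocEquiv _).sum_comp, Fintype.sum_prod_type,
    sum_eq_single ⟨k, hk⟩]
  · simp [snocEquiv_apply, pathVertices_snoc, isUnitStepSeq_snoc, seqWeight_snoc]
  · intro x _ hx
    refine sum_eq_zero fun j _ => if_neg ?_
    simpa [snocEquiv_apply, pathVertices_snoc, Fin.ext_iff] using fun _ => hx
  · simp

theorem pathSum_succ_zero (hr : 0 < r) : pathSum w (m + 1) r 0 = pathSum w m r 0 * w m 0 0 := by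
  rw [pathSum_succ w hr, pathSum, sum_mul]
  refine sum_congr (filter_congr fun j _ => and_congr_right fun _ => by omega) fun j hj => ?_
  rw [(mem_filter.1 hj).2.2]

theorem pathSum_succ_succ {k : ℕ} (hk : k + 1 < r) :
    pathSum w (m + 1) r (k + 1) =
      pathSum w m r (k + 1) * w m (k + 1) (k + 1) + pathSum w m r k * w m k (k + 1) := by
  classical
  have hstep (e : ℕ) : (k + 1 = e ∨ k + 1 = e + 1) ↔ (e = k + 1 ∨ e = k) := by omega
  rw [pathSum_succ w hk, pathSum, pathSum, sum_mul, sum_mul,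
    filter_congr fun j _ => (and_congr_right fun _ => hstep _).trans and_or_left, filter_or,
    sum_union (disjoint_filter.2 fun j _ hj hj' => by omega)]
  congr 1 <;> exact sum_congr rfl fun j hj => by rw [(mem_filter.1 hj).2.2]

end

theorem pathSum_div {K : Type*} [Field K] (v : ℕ → ℕ → ℕ → K) (d : ℕ → K) (m r k : ℕ) :
    pathSum (fun s a b => v s a b / d s) m r k = pathSum v m r k / ∏ s ∈ range m, d s := by
  simp only [pathSum, seqWeight, prod_div_distrib, sum_div, Fin.prod_univ_eq_prod_range d m]

end LatticePath

section AitkenWeights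

variable {R : Type*} [CommRing R]

def descProdTwo (x : R) (k : ℕ) : R :=
  ∏ i ∈ range k, (x - 2 * i)

theorem descProdTwo_succ (x : R) (k : ℕ) :
    descProdTwo x (k + 1) = descProdTwo x k * (x - 2 * k) :=
  prod_range_succ _ _

/-- For `x = 2r - 1` the weight `C^{2r-2-s}_{a,b}` is `aitkenNumerator x s a b / (2 * (x - s))`. -/
def aitkenNumerator (x : R) (s a b : ℕ) : R :=
  if b = a then x - 2 * s + 2 * a else x - 2 * a

theorem pathSum_aitkenNumerator (x : R) (m : ℕ) {r k : ℕ} (hk : k < r) :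
    pathSum (aitkenNumerator x) m r k = m.choose k * descProdTwo x k * descProdTwo x (m - k) := by
  induction m generalizing k with
  | zero => cases k <;> simp [descProdTwo]
  | succ m ih =>
    cases k with
    | zero =>
      rw [pathSum_succ_zero _ hk, ih hk]
      simp [aitkenNumerator, descProdTwo_succ, mul_assoc]
    | succ k =>
      rw [pathSum_succ_succ _ hk, ih hk, ih (by omega : k < r), Nat.choose_succ_succ',
        Nat.cast_add, aitkenNumerator, aitkenNumerator, if_pos rfl, if_neg (Nat.succ_ne_self k),
        Nat.succ_sub_succ, descProdTwo_succ]
      rcases lt_or_ge k m with hkm | hkm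
      · obtain ⟨b, rfl⟩ : ∃ b, m = k + 1 + b := ⟨m - k - 1, by omega⟩
        rw [show k + 1 + b - k = b + 1 by omega, show k + 1 + b - (k + 1) = b by omega,
          descProdTwo_succ]
        push_cast
        ring
      · rw [Nat.choose_eq_zero_of_lt (by omega : m < k + 1), Nat.sub_eq_zero_of_le hkm]
        push_cast
        ring

open Nat in
theorem descProdTwo_mul_doubleFactorial (k b : ℕ) :
    descProdTwo ((2 * (k + b) + 1 : ℕ) : R) k * ((2 * b + 1)‼ : R) = ((2 * (k + b) + 1)‼ : R) := by
  induction k generalizing b with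
  | zero => simp [descProdTwo]
  | succ k ih =>
    have h := ih (b + 1)
    rw [show k + (b + 1) = k + 1 + b by ring, show 2 * (b + 1) + 1 = 2 * b + 1 + 2 by ring,
      Nat.doubleFactorial_add_two] at h
    rw [descProdTwo_succ, ← h]
    push_cast
    ring

end AitkenWeights

open Nat in
theorem Nat.factorial_two_mul_add_one (n : ℕ) : (2 * n + 1)! = (2 * n + 1)‼ * 2 ^ n * n ! := by
  rw [factorial_eq_mul_doubleFactorial, doubleFactorial_two_mul, mul_assoc]

open Nat in
theorem prod_range_two_mul_sub_mul_factorial (n : ℕ) :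
    (∏ s ∈ range n, (2 * ((2 * n + 1 : ℕ) - s : ℝ))) * (n + 1)! = 2 ^ n * (2 * n + 1)! := by
  have hdesc : ∏ s ∈ range n, (((2 * n + 1 : ℕ) : ℝ) - s) = (2 * n + 1).descFactorial n := by
    rw [Nat.descFactorial_eq_prod_range, Nat.cast_prod]
    exact prod_congr rfl fun s hs => by rw [Nat.cast_sub (by have := mem_range.1 hs; omega)]
  rw [prod_mul_distrib, prod_const, card_range, hdesc, mul_assoc, ← Nat.cast_mul,
    mul_comm _ (n + 1)!, ← factorial_mul_descFactorial (by omega : n ≤ 2 * n + 1),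
    show 2 * n + 1 - n = n + 1 by omega]

open Nat in
theorem choose_mul_descProdTwo_div_prod {r k : ℕ} (hk : k < r) :
    ((r - 1).choose k : ℝ) * descProdTwo (2 * r - 1 : ℝ) k * descProdTwo (2 * r - 1 : ℝ) (r - 1 - k)
        / ∏ s ∈ range (r - 1), (2 * (2 * r - 1 - s : ℝ)) =
      ((2 * r).choose (2 * k + 1) : ℝ) / 2 ^ (2 * r - 1) := by
  obtain ⟨b, rfl⟩ : ∃ b, r = k + b + 1 := ⟨r - k - 1, by omega⟩
  have hx : (2 * ((k + b + 1 : ℕ) : ℝ) - 1) = ((2 * (k + b) + 1 : ℕ) : ℝ) := by push_cast; ring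
  have hP₁ := descProdTwo_mul_doubleFactorial (R := ℝ) k b
  have hP₂ := descProdTwo_mul_doubleFactorial (R := ℝ) b k
  rw [add_comm b k] at hP₂
  have hD := prod_range_two_mul_sub_mul_factorial (k + b)
  have hC₂ : ((2 * (k + b + 1)).choose (2 * k + 1) : ℝ) =
      (2 * (k + b) + 2)! / ((2 * k + 1)! * (2 * b + 1)!) := by
    rw [show 2 * (k + b + 1) = 2 * k + 1 + (2 * b + 1) by ring, Nat.cast_add_choose]
    ring_nf
  simp only [hx, show k + b + 1 - 1 = k + b by omega, show k + b - k = b by omega,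
    show 2 * (k + b + 1) - 1 = 2 * (k + b) + 1 by omega, hC₂, Nat.cast_add_choose]
  rw [eq_div_of_mul_eq (by positivity) hP₁, eq_div_of_mul_eq (by positivity) hP₂,
    eq_div_of_mul_eq (by positivity) hD, show 2 * (k + b) + 2 = 2 * (k + b) + 1 + 1 by ring,
    Nat.factorial_succ (2 * (k + b) + 1), Nat.factorial_succ (k + b)]
  simp only [factorial_two_mul_add_one, Nat.cast_mul, Nat.cast_pow]
  field_simp
  push_cast
  ring

/-- The iterated dyadic combination of the Aitken weights
`C_{k,k}^l = (2(l-r+k+1)+1)/(2(l+1))`, `C_{k,k+1}^l = (2(r-k)-1)/(2(l+1))`,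
summed over all admissible index paths (starting from `0`, with first index in `{0,1}`
and each subsequent index equal to the previous one or its successor, the level at
step `s` being `2r-2-s`, running from level `2r-2` down to level `r`), reproduces the
classical binomial optimal weights `C̄_{k_0}^r = binom(2r, 2k_0+1)/2^(2r-1)` as the
coefficient of the standard basis vector `e_{k_0}` of `ℝ^r`. -/
theorem weno_dyadic_tree_weights (r : ℕ) (hr : 2 ≤ r)
    (C : ℤ → ℤ → ℤ → ℝ)
    (hC : ∀ l k k1 : ℤ, C l k k1 =
      if k1 = k then ((2 * (l - r + k + 1) + 1 : ℤ) : ℝ) / ((2 * (l + 1) : ℤ) : ℝ)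
      else ((2 * (r - k) - 1 : ℤ) : ℝ) / ((2 * (l + 1) : ℤ) : ℝ))
    (k0 : ℕ) (hk0 : k0 < r) :
    ∑ j ∈ Finset.univ.filter (fun j : Fin (r - 1) → Fin r =>
        ((j ⟨0, by omega⟩ : ℕ) ≤ 1) ∧
        (∀ s s' : Fin (r - 1), (s' : ℕ) = (s : ℕ) + 1 →
          ((j s' : ℕ) = (j s : ℕ) ∨ (j s' : ℕ) = (j s : ℕ) + 1)) ∧
        (∀ s : Fin (r - 1), (s : ℕ) = r - 2 → (j s : ℕ) = k0)),
      ∏ s : Fin (r - 1),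
        C ((2 * r : ℤ) - 2 - (s : ℤ))
          (if (s : ℕ) = 0 then 0
           else ((j ⟨(s : ℕ) - 1, Nat.lt_of_le_of_lt (Nat.sub_le _ _) s.isLt⟩ : ℕ) : ℤ))
          ((j s : ℕ) : ℤ)
      = (Nat.choose (2 * r) (2 * k0 + 1) : ℝ) / 2 ^ (2 * r - 1) := by
  have hm : 0 < r - 1 := by omega
  have hw (s a b : ℕ) : C ((2 * r : ℤ) - 2 - s) a b =
      aitkenNumerator (2 * r - 1 : ℝ) s a b / (2 * (2 * r - 1 - s)) := by
    simp only [hC, aitkenNumerator, Nat.cast_inj]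
    split_ifs <;> push_cast <;> ring
  calc _ = pathSum (fun s a b => aitkenNumerator (2 * r - 1 : ℝ) s a b / (2 * (2 * r - 1 - s)))
        (r - 1) r k0 := by
        refine sum_congr (filter_congr fun j _ => ?_) fun j _ => prod_congr rfl fun s _ => ?_
        · exact (((isUnitStepSeq_pathVertices_iff hm j).and
            (pathVertices_last_eq_iff hm j k0)).trans and_assoc).symm
        · beta_reduce
          rw [← hw, pathVertices_castSucc, pathVertices_succ, Nat.cast_ite, Nat.cast_zero]
    _ = _ := by
      rw [pathSum_div, pathSum_aitkenNumerator _ _ hk0, choose_mul_descProdTwo_div_prod hk0]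
end

section
/- Let p be a polynomial of degree ≤ r with r ≥ 3, and let x* = x_i - h/2 be the midpoint of [x_{i-1}, x_i] with spacing h = x_i - x_{i-1}. Define I = ∑_{l=2}^{r} h^(2l-1) ∫_{x_{i-1}}^{x_i} (p^{(l)}(x))² dx. Then I = (h² · p''(x*))² · (1 + O(h²)) as h → 0; more precisely, |I - (h² p''(x*))²| ≤ C·h^6 where C depends only on bounds on the derivatives p^{(l)} of orders 2 ≤ l ≤ r on the interval. -/
open Polynomial intervalIntegral

/-- Theorem 2 (smoothness indicator expansion): for a polynomial `p` of degree `≤ r`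
(`r ≥ 3`), the smoothness indicator
`I = ∑_{l=2}^r h^(2l-1) ∫_{x_{i-1}}^{x_i} (p^{(l)}(x))² dx`
satisfies `I = (h² p''(x*))² (1 + O(h²))`, i.e.
`|I - (h² p''(x*))²| ≤ C h^6` with `C` depending only on `r` and a bound `M` on the
derivatives `p^{(l)}`, `2 ≤ l ≤ r`, on the interval; here `x*` is the midpoint. -/
theorem smoothness_indicator_midpoint_expansion (r : ℕ) (hr : 3 ≤ r) (M : ℝ) (hM : 0 ≤ M) :
    ∃ C : ℝ, ∀ (p : Polynomial ℝ) (x₀ h : ℝ), 0 < h → h ≤ 1 → p.natDegree ≤ r →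
      (∀ l : ℕ, 2 ≤ l → l ≤ r → ∀ x ∈ Set.Icc x₀ (x₀ + h),
        |((fun q : Polynomial ℝ => derivative q)^[l] p).eval x| ≤ M) →
      |(∑ l ∈ Finset.Icc 2 r, h ^ (2 * l - 1) *
            ∫ x in x₀..(x₀ + h), (((fun q : Polynomial ℝ => derivative q)^[l] p).eval x) ^ 2)
        - (h ^ 2 * ((fun q : Polynomial ℝ => derivative q)^[2] p).eval (x₀ + h / 2)) ^ 2|
        ≤ C * h ^ 6 := by
  refine ⟨((r : ℝ) + 1) * M ^ 2, ?_⟩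
  intro p x₀ h hh hh1 hdeg hbound
  have hb : ∀ l : ℕ, 2 ≤ l → ∀ x ∈ Set.Icc x₀ (x₀ + h),
      |((fun q : Polynomial ℝ => derivative q)^[l] p).eval x| ≤ M := by
    intro l h2 x hx
    by_cases hl : l ≤ r
    · exact hbound l h2 hl x hx
    · have hz : (fun q : Polynomial ℝ => derivative q)^[l] p = 0 :=
        Polynomial.iterate_derivative_eq_zero (by omega)
      simp [hz, hM]
  set q2 : Polynomial ℝ := (fun q : Polynomial ℝ => derivative q)^[2] p with hq2
  set q3 : Polynomial ℝ := (fun q : Polynomial ℝ => derivative q)^[3] p with hq3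
  set q4 : Polynomial ℝ := (fun q : Polynomial ℝ => derivative q)^[4] p with hq4
  have hdq2 : derivative q2 = q3 :=
    (Function.iterate_succ_apply' (fun q : Polynomial ℝ => derivative q) 2 p).symm
  have hdq3 : derivative q3 = q4 :=
    (Function.iterate_succ_apply' (fun q : Polynomial ℝ => derivative q) 3 p).symm
  set c : ℝ := x₀ + h / 2 with hc
  have hcmem : c ∈ Set.Icc x₀ (x₀ + h) := ⟨by simp [hc]; linarith, by simp [hc]; linarith⟩
  have hb2 := hb 2 le_rfl
  have hb3 := hb 3 (by norm_num)
  have hb4 := hb 4 (by norm_num)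
  -- ψ and ψ₁
  set A : ℝ := q2.eval c with hA
  set B : ℝ := q3.eval c with hB
  set ψ : ℝ → ℝ := fun x => (q2.eval x) ^ 2 - A ^ 2 - 2 * A * B * (x - c) with hψ
  set ψ₁ : ℝ → ℝ := fun x => 2 * q2.eval x * q3.eval x - 2 * A * B with hψ₁
  set ψ₂ : ℝ → ℝ := fun x => 2 * (q3.eval x) ^ 2 + 2 * q2.eval x * q4.eval x with hψ₂
  have hd1 : ∀ x : ℝ, HasDerivAt ψ (ψ₁ x) x := by
    intro x
    have h1 : HasDerivAt (fun x => (q2.eval x) ^ 2) (2 * q2.eval x * q3.eval x) x := by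
      have := (q2.hasDerivAt x).pow 2
      have hv : 2 * q2.eval x * q3.eval x = ↑2 * q2.eval x ^ (2 - 1) * (derivative q2).eval x := by
        rw [hdq2]; push_cast; ring
      rw [hv]; exact this
    have h2 : HasDerivAt (fun x => A ^ 2 + 2 * A * B * (x - c)) (2 * A * B) x := by
      have hlin : HasDerivAt (fun x : ℝ => x - c) 1 x := (hasDerivAt_id x).sub_const c
      simpa using (hlin.const_mul (2 * A * B)).const_add (A ^ 2)
    have h3 := h1.sub h2
    have hfun : ψ = fun y => (q2.eval y) ^ 2 - (A ^ 2 + 2 * A * B * (y - c)) := by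
      funext y; simp only [hψ]; ring
    rw [hfun]
    exact h3
  have hd2 : ∀ x : ℝ, HasDerivAt ψ₁ (ψ₂ x) x := by
    intro x
    have h1 := (((q2.hasDerivAt x).mul (q3.hasDerivAt x)).const_mul 2).sub_const (2 * A * B)
    have hfun : ψ₁ = fun y => 2 * (q2.eval y * q3.eval y) - 2 * A * B := by
      funext y; simp only [hψ₁]; ring
    have hv : ψ₂ x = 2 * ((derivative q2).eval x * q3.eval x
        + q2.eval x * (derivative q3).eval x) := by
      simp only [hψ₂, hdq2, hdq3]; ring
    rw [hfun, hv]
    exact h1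
  have hsub : ∀ x ∈ Set.Icc x₀ (x₀ + h), Set.uIoc c x ⊆ Set.Icc x₀ (x₀ + h) := by
    intro x hx
    exact Set.uIoc_subset_uIcc.trans (Set.uIcc_subset_Icc (by exact hcmem) hx)
  have hcont2 : Continuous fun x : ℝ => q2.eval x := q2.continuous
  have hcont3 : Continuous fun x : ℝ => q3.eval x := q3.continuous
  have hcont4 : Continuous fun x : ℝ => q4.eval x := q4.continuous
  have hcontψ₂ : Continuous ψ₂ := by
    simp only [hψ₂]
    fun_prop
  have hcontψ₁ : Continuous ψ₁ := by
    simp only [hψ₁]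
    fun_prop
  have hcontψ : Continuous ψ := by
    simp only [hψ]
    fun_prop
  -- bound on ψ₂
  have hψ₂b : ∀ t ∈ Set.Icc x₀ (x₀ + h), |ψ₂ t| ≤ 4 * M ^ 2 := by
    intro t ht
    have ha := abs_le.mp (hb3 t ht)
    have hbq := abs_le.mp (hb2 t ht)
    have hd := abs_le.mp (hb4 t ht)
    rw [abs_le]
    constructor
    · simp only [hψ₂]
      nlinarith [sq_nonneg (q3.eval t),
        mul_nonneg (sub_nonneg.2 hbq.2) (sub_nonneg.2 hd.2),
        mul_nonneg (sub_nonneg.2 hbq.2) (by linarith : (0:ℝ) ≤ q4.eval t + M),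
        mul_nonneg (by linarith : (0:ℝ) ≤ q2.eval t + M) (sub_nonneg.2 hd.2),
        mul_nonneg (by linarith : (0:ℝ) ≤ q2.eval t + M) (by linarith : (0:ℝ) ≤ q4.eval t + M)]
    · simp only [hψ₂]
      nlinarith [mul_nonneg (sub_nonneg.2 ha.2) (by linarith : (0:ℝ) ≤ q3.eval t + M),
        mul_nonneg (sub_nonneg.2 hbq.2) (sub_nonneg.2 hd.2),
        mul_nonneg (sub_nonneg.2 hbq.2) (by linarith : (0:ℝ) ≤ q4.eval t + M),
        mul_nonneg (by linarith : (0:ℝ) ≤ q2.eval t + M) (sub_nonneg.2 hd.2),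
        mul_nonneg (by linarith : (0:ℝ) ≤ q2.eval t + M) (by linarith : (0:ℝ) ≤ q4.eval t + M)]
  have hdist : ∀ x ∈ Set.Icc x₀ (x₀ + h), |x - c| ≤ h / 2 := by
    intro x hx
    rw [abs_le]
    obtain ⟨h1, h2⟩ := hx
    constructor <;> simp only [hc] at * <;> linarith
  -- bound on ψ₁ via FTC
  have hψ₁c : ψ₁ c = 0 := by simp only [hψ₁, hA, hB]; ring
  have hψ₁b : ∀ x ∈ Set.Icc x₀ (x₀ + h), |ψ₁ x| ≤ 4 * M ^ 2 * (h / 2) := by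
    intro x hx
    have hftc : ∫ t in c..x, ψ₂ t = ψ₁ x - ψ₁ c :=
      integral_eq_sub_of_hasDerivAt (fun t _ => hd2 t) (hcontψ₂.intervalIntegrable _ _)
    have hn : ‖∫ t in c..x, ψ₂ t‖ ≤ 4 * M ^ 2 * |x - c| :=
      norm_integral_le_of_norm_le_const (fun t ht => by
        simpa using hψ₂b t (hsub x hx ht))
    rw [hftc, hψ₁c, sub_zero] at hn
    calc |ψ₁ x| ≤ 4 * M ^ 2 * |x - c| := hn
      _ ≤ 4 * M ^ 2 * (h / 2) := by
          apply mul_le_mul_of_nonneg_left (hdist x hx) (by positivity)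
  -- bound on ψ via FTC
  have hψc : ψ c = 0 := by simp only [hψ, hA]; ring
  have hψb : ∀ x ∈ Set.Icc x₀ (x₀ + h), |ψ x| ≤ 4 * M ^ 2 * (h / 2) * (h / 2) := by
    intro x hx
    have hftc : ∫ t in c..x, ψ₁ t = ψ x - ψ c :=
      integral_eq_sub_of_hasDerivAt (fun t _ => hd1 t) (hcontψ₁.intervalIntegrable _ _)
    have hn : ‖∫ t in c..x, ψ₁ t‖ ≤ 4 * M ^ 2 * (h / 2) * |x - c| :=
      norm_integral_le_of_norm_le_const (fun t ht => by
        simpa using hψ₁b t (hsub x hx ht))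
    rw [hftc, hψc, sub_zero] at hn
    calc |ψ x| ≤ 4 * M ^ 2 * (h / 2) * |x - c| := hn
      _ ≤ 4 * M ^ 2 * (h / 2) * (h / 2) := by
          apply mul_le_mul_of_nonneg_left (hdist x hx) (by positivity)
  -- integral of ψ
  have hψint : |∫ x in x₀..(x₀ + h), ψ x| ≤ M ^ 2 * h ^ 3 := by
    have hn : ‖∫ x in x₀..(x₀ + h), ψ x‖ ≤ 4 * M ^ 2 * (h / 2) * (h / 2) * |x₀ + h - x₀| :=
      norm_integral_le_of_norm_le_const (fun t ht => by
        have : t ∈ Set.Icc x₀ (x₀ + h) := by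
          have := Set.uIoc_of_le (by linarith : x₀ ≤ x₀ + h) ▸ ht
          exact Set.Ioc_subset_Icc_self this
        simpa using hψb t this)
    have h2 : |x₀ + h - x₀| = h := by rw [abs_of_pos]; ring; linarith
    rw [h2] at hn
    calc |∫ x in x₀..(x₀ + h), ψ x| ≤ 4 * M ^ 2 * (h / 2) * (h / 2) * h := hn
      _ = M ^ 2 * h ^ 3 := by ring
  -- linear term integrates to zero
  have hlin : (∫ x in x₀..(x₀ + h), (x - c)) = 0 := by
    have hs := intervalIntegral.integral_sub (μ := MeasureTheory.volume) (a := x₀)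
      (b := x₀ + h) (f := fun x : ℝ => x) (g := fun _ : ℝ => c)
      (continuous_id.intervalIntegrable _ _) intervalIntegrable_const
    rw [hs]
    simp only [integral_id, integral_const, smul_eq_mul, hc]
    ring
  -- splitting the integral
  have hsplit : (∫ x in x₀..(x₀ + h), ψ x)
      = (∫ x in x₀..(x₀ + h), (q2.eval x) ^ 2) - h * A ^ 2 := by
    have i1 : IntervalIntegrable (fun x => (q2.eval x) ^ 2) MeasureTheory.volume x₀ (x₀ + h) :=
      (hcont2.pow 2).intervalIntegrable _ _
    have i2 : IntervalIntegrable (fun x : ℝ => A ^ 2) MeasureTheory.volume x₀ (x₀ + h) :=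
      intervalIntegrable_const
    have i3 : IntervalIntegrable (fun x : ℝ => 2 * A * B * (x - c))
        MeasureTheory.volume x₀ (x₀ + h) :=
      (continuous_const.mul (continuous_id.sub continuous_const)).intervalIntegrable _ _
    calc (∫ x in x₀..(x₀ + h), ψ x)
        = ∫ x in x₀..(x₀ + h), ((q2.eval x) ^ 2 - A ^ 2 - 2 * A * B * (x - c)) := rfl
      _ = (∫ x in x₀..(x₀ + h), ((q2.eval x) ^ 2 - A ^ 2))
            - ∫ x in x₀..(x₀ + h), (2 * A * B) * (x - c) := by
          rw [intervalIntegral.integral_sub (i1.sub i2) i3]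
      _ = (∫ x in x₀..(x₀ + h), (q2.eval x) ^ 2) - h * A ^ 2 := by
          rw [intervalIntegral.integral_sub i1 i2,
            intervalIntegral.integral_const_mul, hlin,
            intervalIntegral.integral_const]
          simp only [smul_eq_mul, mul_zero, sub_zero]
          ring
  -- tail bound
  have htail : ∀ l ∈ Finset.Icc 3 r,
      |h ^ (2 * l - 1) * ∫ x in x₀..(x₀ + h),
        (((fun q : Polynomial ℝ => derivative q)^[l] p).eval x) ^ 2| ≤ M ^ 2 * h ^ 6 := by
    intro l hl
    rw [Finset.mem_Icc] at hl
    have hint : |∫ x in x₀..(x₀ + h),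
        (((fun q : Polynomial ℝ => derivative q)^[l] p).eval x) ^ 2| ≤ M ^ 2 * h := by
      have hn := norm_integral_le_of_norm_le_const (a := x₀) (b := x₀ + h) (C := M ^ 2)
        (f := fun x => (((fun q : Polynomial ℝ => derivative q)^[l] p).eval x) ^ 2)
        (fun t ht => by
          have htmem : t ∈ Set.Icc x₀ (x₀ + h) :=
            Set.Ioc_subset_Icc_self (Set.uIoc_of_le (by linarith : x₀ ≤ x₀ + h) ▸ ht)
          have hbt := hb l (by omega) t htmem
          rw [Real.norm_eq_abs, abs_pow]
          exact pow_le_pow_left₀ (abs_nonneg _) hbt 2)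
      rw [Real.norm_eq_abs] at hn
      have habs : |x₀ + h - x₀| = h := by
        rw [show x₀ + h - x₀ = h by ring, abs_of_pos hh]
      rw [habs] at hn
      exact hn
    have hpos : (0:ℝ) < h ^ (2 * l - 1) := pow_pos hh _
    rw [abs_mul, abs_of_pos hpos]
    calc h ^ (2 * l - 1) * |∫ x in x₀..(x₀ + h),
          (((fun q : Polynomial ℝ => derivative q)^[l] p).eval x) ^ 2|
        ≤ h ^ (2 * l - 1) * (M ^ 2 * h) := mul_le_mul_of_nonneg_left hint hpos.le
      _ = M ^ 2 * h ^ (2 * l - 1 + 1) := by rw [pow_succ]; ring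
      _ = M ^ 2 * h ^ (2 * l) := by rw [show 2 * l - 1 + 1 = 2 * l from by omega]
      _ ≤ M ^ 2 * h ^ 6 := by
          exact mul_le_mul_of_nonneg_left
            (pow_le_pow_of_le_one hh.le hh1 (by omega)) (sq_nonneg M)
  -- split the sum
  have hset : Finset.Icc 2 r = insert 2 (Finset.Icc 3 r) := by
    ext x; simp only [Finset.mem_Icc, Finset.mem_insert]; omega
  have hnot : (2:ℕ) ∉ Finset.Icc 3 r := by simp
  rw [hset, Finset.sum_insert hnot]
  set T : ℝ := ∑ l ∈ Finset.Icc 3 r, h ^ (2 * l - 1) *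
      ∫ x in x₀..(x₀ + h), (((fun q : Polynomial ℝ => derivative q)^[l] p).eval x) ^ 2 with hT
  have hTb : |T| ≤ (r : ℝ) * (M ^ 2 * h ^ 6) := by
    calc |T| ≤ ∑ l ∈ Finset.Icc 3 r, |h ^ (2 * l - 1) *
          ∫ x in x₀..(x₀ + h), (((fun q : Polynomial ℝ => derivative q)^[l] p).eval x) ^ 2| :=
        Finset.abs_sum_le_sum_abs _ _
      _ ≤ ∑ _l ∈ Finset.Icc 3 r, M ^ 2 * h ^ 6 := Finset.sum_le_sum htail
      _ = ((Finset.Icc 3 r).card : ℝ) * (M ^ 2 * h ^ 6) := by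
          rw [Finset.sum_const, nsmul_eq_mul]
      _ ≤ (r : ℝ) * (M ^ 2 * h ^ 6) := by
          apply mul_le_mul_of_nonneg_right _ (by positivity)
          rw [Nat.card_Icc]
          exact_mod_cast Nat.cast_le.mpr (by omega : r + 1 - 3 ≤ r)
  have hkey : h ^ (2 * 2 - 1) * (∫ x in x₀..(x₀ + h), (q2.eval x) ^ 2) + T
      - (h ^ 2 * q2.eval c) ^ 2 = h ^ 3 * (∫ x in x₀..(x₀ + h), ψ x) + T := by
    rw [show (2 * 2 - 1 : ℕ) = 3 by norm_num, hsplit, hA]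
    ring
  rw [hkey]
  calc |h ^ 3 * (∫ x in x₀..(x₀ + h), ψ x) + T|
      ≤ h ^ 3 * |∫ x in x₀..(x₀ + h), ψ x| + |T| := by
        refine (abs_add_le _ _).trans ?_
        rw [abs_mul, abs_of_pos (pow_pos hh 3)]
    _ ≤ h ^ 3 * (M ^ 2 * h ^ 3) + (r : ℝ) * (M ^ 2 * h ^ 6) :=
        add_le_add (mul_le_mul_of_nonneg_left hψint (pow_pos hh 3).le) hTb
    _ = ((r : ℝ) + 1) * M ^ 2 * h ^ 6 := by ring
end

section
/- Let ε > 0, t ≥ 1 integer, C_0, C_1 > 0 with C_0 + C_1 = 1, and suppose that for a family parameterized by h > 0 the smoothness indicators satisfy I_0(h) = O(h^(2m)) with I_0(h) ≥ c·h^(2m) > 0 and I_1(h) ≥ δ > 0 for all small h (discontinuity affecting only I_1), with ε ≤ c·h^(2m). Then the nonlinear weights ω_0 = [C_0/(ε+I_0)^t] / [C_0/(ε+I_0)^t + C_1/(ε+I_1)^t] and ω_1 = 1 - ω_0 satisfy ω_0 = 1 + O(h^(2mt)) and ω_1 = O(h^(2mt)) as h → 0. -/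
/-!
The weight `ω₁` is at most `α₁ / α₀ = (C₁ / C₀) ((ε + I₀) / (ε + I₁))^t`, and `1 - ω₀ = ω₁`.
On the smooth stencil `ε + I₀ = O(h^(2m))` (this is where `ε ≤ c h^(2m)` enters), while across
the discontinuity `ε + I₁ ≥ δ`; hence `ω₁ = O(h^(2mt))`.
-/

lemma abs_normalized_weights_le {a₀ a₁ B : ℝ} (ha₀ : 0 < a₀) (ha₁ : 0 ≤ a₁)
    (hB : a₁ / a₀ ≤ B) :
    |a₀ / (a₀ + a₁) - 1| ≤ B ∧ |a₁ / (a₀ + a₁)| ≤ B := by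
  have hsum : 0 < a₀ + a₁ := by linarith
  have hω₁ : 0 ≤ a₁ / (a₀ + a₁) := by positivity
  have hω₁_le : a₁ / (a₀ + a₁) ≤ B :=
    (div_le_div_of_nonneg_left ha₁ ha₀ (by linarith)).trans hB
  have hω₀ : a₀ / (a₀ + a₁) - 1 = -(a₁ / (a₀ + a₁)) := by
    field_simp
    ring
  rw [hω₀, abs_neg, abs_of_nonneg hω₁]
  exact ⟨hω₁_le, hω₁_le⟩

lemma div_div_pow_div_div_pow {C₀ C₁ β₀ β₁ : ℝ} (t : ℕ) (hC₀ : C₀ ≠ 0) (hβ₀ : β₀ ≠ 0)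
    (hβ₁ : β₁ ≠ 0) :
    C₁ / β₁ ^ t / (C₀ / β₀ ^ t) = C₁ / C₀ * (β₀ / β₁) ^ t := by
  rw [div_pow]
  field_simp

lemma add_div_add_le_div_mul_pow {ε c A δ I₀ I₁ h : ℝ} {m : ℕ}
    (hε : 0 < ε) (hεh : ε ≤ c * h ^ (2 * m)) (hI₀ : I₀ ≤ A * h ^ (2 * m))
    (hδ : 0 < δ) (hI₁ : δ ≤ I₁) :
    (ε + I₀) / (ε + I₁) ≤ (c + |A|) / δ * h ^ (2 * m) := by
  have hp : 0 ≤ h ^ (2 * m) := (even_two_mul m).pow_nonneg h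
  have hA : A * h ^ (2 * m) ≤ |A| * h ^ (2 * m) :=
    mul_le_mul_of_nonneg_right (le_abs_self A) hp
  have hnum : ε + I₀ ≤ (c + |A|) * h ^ (2 * m) := by linarith
  have hnum_nonneg : 0 ≤ (c + |A|) * h ^ (2 * m) := by
    have : 0 ≤ |A| * h ^ (2 * m) := mul_nonneg (abs_nonneg A) hp
    linarith
  rw [div_mul_eq_mul_div]
  exact div_le_div₀ hnum_nonneg hnum hδ (by linarith)

theorem weno_weights_discontinuity_detection_general (m t : ℕ)
    (C0 C1 ε c δ A : ℝ) (hC0 : 0 < C0) (hC1 : 0 < C1)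
    (hε : 0 < ε) (hδ : 0 < δ)
    (I0 I1 : ℝ → ℝ)
    (hI0low : ∀ h : ℝ, 0 < h → c * h ^ (2 * m) ≤ I0 h)
    (hI0up : ∀ h : ℝ, 0 < h → I0 h ≤ A * h ^ (2 * m))
    (hI1 : ∀ h : ℝ, 0 < h → δ ≤ I1 h) :
    ∃ C : ℝ, ∀ h : ℝ, 0 < h → h ≤ 1 → ε ≤ c * h ^ (2 * m) →
      let α0 : ℝ := C0 / (ε + I0 h) ^ t
      let α1 : ℝ := C1 / (ε + I1 h) ^ t
      |α0 / (α0 + α1) - 1| ≤ C * h ^ (2 * m * t) ∧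
      |α1 / (α0 + α1)| ≤ C * h ^ (2 * m * t) := by
  refine ⟨C1 / C0 * ((c + |A|) / δ) ^ t, fun h hh _ hεh => ?_⟩
  have hβ₀ : 0 < ε + I0 h := by linarith [hI0low h hh]
  have hβ₁ : 0 < ε + I1 h := by linarith [hI1 h hh]
  have hratio := add_div_add_le_div_mul_pow hε hεh (hI0up h hh) hδ (hI1 h hh)
  apply abs_normalized_weights_le (by positivity) (by positivity)
  rw [div_div_pow_div_div_pow t hC0.ne' hβ₀.ne' hβ₁.ne', pow_mul, mul_assoc, ← mul_pow]
  gcongr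

/-- Case 2 of Proposition 4 (discontinuity detection): if the smoothness indicator
`I_0(h)` is of exact size `h^(2m)` (smooth stencil) while `I_1(h)` stays bounded below
by `δ > 0` (stencil crossed by the discontinuity), and `ε ≤ c h^(2m)`, then the
nonlinear weights satisfy `ω_0 = 1 + O(h^(2mt))` and `ω_1 = O(h^(2mt))`. -/
theorem weno_weights_discontinuity_detection (m t : ℕ) (hm : 1 ≤ m) (ht : 1 ≤ t)
    (C0 C1 ε c δ A : ℝ) (hC0 : 0 < C0) (hC1 : 0 < C1) (hCsum : C0 + C1 = 1)
    (hε : 0 < ε) (hc : 0 < c) (hδ : 0 < δ)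
    (I0 I1 : ℝ → ℝ)
    (hI0low : ∀ h : ℝ, 0 < h → c * h ^ (2 * m) ≤ I0 h)
    (hI0up : ∀ h : ℝ, 0 < h → I0 h ≤ A * h ^ (2 * m))
    (hI1 : ∀ h : ℝ, 0 < h → δ ≤ I1 h) :
    ∃ C : ℝ, ∀ h : ℝ, 0 < h → h ≤ 1 → ε ≤ c * h ^ (2 * m) →
      let α0 : ℝ := C0 / (ε + I0 h) ^ t
      let α1 : ℝ := C1 / (ε + I1 h) ^ t
      |α0 / (α0 + α1) - 1| ≤ C * h ^ (2 * m * t) ∧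
      |α1 / (α0 + α1)| ≤ C * h ^ (2 * m * t) :=
  weno_weights_discontinuity_detection_general m t C0 C1 ε c δ A hC0 hC1 hε hδ I0 I1 hI0low hI0up
    hI1
end

section
/- Let ε > 0, t ≥ 1 integer, C_0, C_1 > 0 with C_0 + C_1 = 1, and suppose smoothness indicators I_0(h), I_1(h) satisfy |I_0(h) - I_1(h)| ≤ K h^(r-1+4) and I_j(h) ≥ c h^4 for j = 0,1 and small h > 0, with 0 < ε ≤ h^4 (smooth case). Then the nonlinear weights ω_j = [C_j/(ε+I_j)^t] / [C_0/(ε+I_0)^t + C_1/(ε+I_1)^t] satisfy ω_0 = C_0 + O(h^(r-1)) and ω_1 = C_1 + O(h^(r-1)) as h → 0. -/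
/-!
Write `a = ε + I₀`, `b = ε + I₁`. Both are at least `c h⁴`, while they differ by at most
`K h^(r+3)`, so each is within relative distance `δ = (K / c) h^(r-1)` of the other and
`|aᵗ - bᵗ| ≤ t (1 + δ)^(t-1) δ bᵗ`. Clearing denominators,
`ω₀ - C₀ = C₀ C₁ (bᵗ - aᵗ) / (C₀ bᵗ + C₁ aᵗ)`, and the denominator is at least `C₀ bᵗ`,
so `|ω₀ - C₀| ≤ C₁ |aᵗ - bᵗ| / bᵗ = O(h^(r-1))`; the bound for `ω₁` is the same with the
stencils swapped.
-/

theorem abs_pow_sub_pow_le_of_abs_sub_le_mul {a b δ : ℝ} (n : ℕ) (ha : 0 ≤ a) (hb : 0 ≤ b)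
    (hab : |a - b| ≤ δ * b) : |a ^ n - b ^ n| ≤ n * (1 + δ) ^ (n - 1) * δ * b ^ n := by
  obtain _ | n := n
  · simp
  have hδb : 0 ≤ δ * b := (abs_nonneg _).trans hab
  have hmax : max |a| |b| ≤ (1 + δ) * b := by
    rw [abs_of_nonneg ha, abs_of_nonneg hb]
    exact max_le (by linarith [le_abs_self (a - b)]) (by linarith)
  calc |a ^ (n + 1) - b ^ (n + 1)|
      ≤ |a - b| * (n + 1 : ℕ) * max |a| |b| ^ n := abs_pow_sub_pow_le a b (n + 1)
    _ ≤ δ * b * (n + 1 : ℕ) * ((1 + δ) * b) ^ n := by gcongr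
    _ = (n + 1 : ℕ) * (1 + δ) ^ n * δ * b ^ (n + 1) := by rw [mul_pow]; ring

theorem abs_div_div_add_div_sub_le {C₀ C₁ x y η : ℝ} (hC₀ : 0 < C₀) (hC₁ : 0 ≤ C₁)
    (hsum : C₀ + C₁ = 1) (hx : 0 < x) (hy : 0 < y) (hxy : |x - y| ≤ η * y) :
    |C₀ / x / (C₀ / x + C₁ / y) - C₀| ≤ η := by
  have hD : 0 < C₀ * y + C₁ * x := by positivity
  have hη : 0 ≤ η := nonneg_of_mul_nonneg_left ((abs_nonneg _).trans hxy) hy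
  have hweight : C₀ / x / (C₀ / x + C₁ / y) - C₀ = C₀ * C₁ * (y - x) / (C₀ * y + C₁ * x) := by
    rw [eq_div_iff hD.ne']
    field_simp
    linear_combination (-y) * hsum
  rw [hweight, abs_div, abs_of_pos hD, div_le_iff₀ hD, abs_mul, abs_of_nonneg (by positivity),
    abs_sub_comm]
  calc C₀ * C₁ * |x - y| ≤ C₀ * C₁ * (η * y) := by gcongr
    _ ≤ η * (C₀ * y + C₁ * x) := by
      nlinarith [mul_nonneg hη (mul_nonneg hC₁ hx.le),
        mul_nonneg (mul_nonneg hη hy.le) (sq_nonneg C₀)]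

theorem abs_sub_le_mul_of_abs_sub_le_mul_pow {c K h x y : ℝ} (m : ℕ) (hc : 0 < c) (hK : 0 ≤ K)
    (hh : 0 ≤ h) (hy : c * h ^ 4 ≤ y) (hxy : |x - y| ≤ K * h ^ (m + 4)) :
    |x - y| ≤ K / c * h ^ m * y :=
  calc |x - y| ≤ K * h ^ (m + 4) := hxy
    _ = K / c * h ^ m * (c * h ^ 4) := by field_simp; ring
    _ ≤ K / c * h ^ m * y := by gcongr

theorem abs_weno_weight_sub_le {C₀ C₁ c K ε h x y : ℝ} (m t : ℕ) (hC₀ : 0 < C₀) (hC₁ : 0 ≤ C₁)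
    (hsum : C₀ + C₁ = 1) (hc : 0 < c) (hK : 0 ≤ K) (hh : 0 < h) (hh1 : h ≤ 1) (hε : 0 ≤ ε)
    (hx : c * h ^ 4 ≤ x) (hy : c * h ^ 4 ≤ y) (hxy : |x - y| ≤ K * h ^ (m + 4)) :
    |C₀ / (ε + x) ^ t / (C₀ / (ε + x) ^ t + C₁ / (ε + y) ^ t) - C₀|
      ≤ t * (1 + K / c) ^ (t - 1) * (K / c) * h ^ m := by
  have hx₀ : 0 < ε + x := by nlinarith [pow_pos hh 4]
  have hy₀ : 0 < ε + y := by nlinarith [pow_pos hh 4]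
  have hrel : |(ε + x) - (ε + y)| ≤ K / c * h ^ m * (ε + y) := by
    rw [add_sub_add_left_eq_sub]
    exact (abs_sub_le_mul_of_abs_sub_le_mul_pow m hc hK hh.le hy hxy).trans
      (by gcongr; linarith)
  have hδ : K / c * h ^ m ≤ K / c := mul_le_of_le_one_right (by positivity) (pow_le_one₀ hh.le hh1)
  refine abs_div_div_add_div_sub_le hC₀ hC₁ hsum (pow_pos hx₀ t) (pow_pos hy₀ t) ?_
  calc |(ε + x) ^ t - (ε + y) ^ t|
      ≤ t * (1 + K / c * h ^ m) ^ (t - 1) * (K / c * h ^ m) * (ε + y) ^ t :=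
        abs_pow_sub_pow_le_of_abs_sub_le_mul t hx₀.le hy₀.le hrel
    _ ≤ t * (1 + K / c) ^ (t - 1) * (K / c * h ^ m) * (ε + y) ^ t := by gcongr
    _ = t * (1 + K / c) ^ (t - 1) * (K / c) * h ^ m * (ε + y) ^ t := by ring

theorem weno_weights_smooth_case_general (r t : ℕ)
    (C0 C1 c K : ℝ) (hC0 : 0 < C0) (hC1 : 0 < C1) (hCsum : C0 + C1 = 1)
    (hc : 0 < c) (hK : 0 ≤ K)
    (I0 I1 : ℝ → ℝ)
    (hclose : ∀ h : ℝ, 0 < h → h ≤ 1 → |I0 h - I1 h| ≤ K * h ^ (r - 1 + 4))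
    (hI0 : ∀ h : ℝ, 0 < h → h ≤ 1 → c * h ^ 4 ≤ I0 h)
    (hI1 : ∀ h : ℝ, 0 < h → h ≤ 1 → c * h ^ 4 ≤ I1 h) :
    ∃ C : ℝ, ∀ ε h : ℝ, 0 < h → h ≤ 1 → 0 < ε → ε ≤ h ^ 4 →
      let α0 : ℝ := C0 / (ε + I0 h) ^ t
      let α1 : ℝ := C1 / (ε + I1 h) ^ t
      |α0 / (α0 + α1) - C0| ≤ C * h ^ (r - 1) ∧
      |α1 / (α0 + α1) - C1| ≤ C * h ^ (r - 1) := by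
  refine ⟨t * (1 + K / c) ^ (t - 1) * (K / c), fun ε h hh hh1 hε _ => ⟨?_, ?_⟩⟩
  · exact abs_weno_weight_sub_le (r - 1) t hC0 hC1.le hCsum hc hK hh hh1 hε.le
      (hI0 h hh hh1) (hI1 h hh hh1) (hclose h hh hh1)
  · rw [add_comm (C0 / _)]
    exact abs_weno_weight_sub_le (r - 1) t hC1 hC0.le (by linarith) hc hK hh hh1 hε.le
      (hI1 h hh hh1) (hI0 h hh hh1) (abs_sub_comm (I0 h) (I1 h) ▸ hclose h hh hh1)

/-- Case 1 of Proposition 4 (smooth case): if the smoothness indicators of the two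
stencils agree up to `O(h^(r-1+4))` and are each bounded below by `c h^4`, with
`0 < ε ≤ h^4`, then the nonlinear weights recover the linear weights up to
`O(h^(r-1))`: `ω_0 = C_0 + O(h^(r-1))` and `ω_1 = C_1 + O(h^(r-1))`. -/
theorem weno_weights_smooth_case (r t : ℕ) (hr : 1 ≤ r) (ht : 1 ≤ t)
    (C0 C1 c K : ℝ) (hC0 : 0 < C0) (hC1 : 0 < C1) (hCsum : C0 + C1 = 1)
    (hc : 0 < c) (hK : 0 ≤ K)
    (I0 I1 : ℝ → ℝ)
    (hclose : ∀ h : ℝ, 0 < h → h ≤ 1 → |I0 h - I1 h| ≤ K * h ^ (r - 1 + 4))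
    (hI0 : ∀ h : ℝ, 0 < h → h ≤ 1 → c * h ^ 4 ≤ I0 h)
    (hI1 : ∀ h : ℝ, 0 < h → h ≤ 1 → c * h ^ 4 ≤ I1 h) :
    ∃ C : ℝ, ∀ ε h : ℝ, 0 < h → h ≤ 1 → 0 < ε → ε ≤ h ^ 4 →
      let α0 : ℝ := C0 / (ε + I0 h) ^ t
      let α1 : ℝ := C1 / (ε + I1 h) ^ t
      |α0 / (α0 + α1) - C0| ≤ C * h ^ (r - 1) ∧
      |α1 / (α0 + α1) - C1| ≤ C * h ^ (r - 1) :=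
  weno_weights_smooth_case_general r t C0 C1 c K hC0 hC1 hCsum hc hK I0 I1 hclose hI0 hI1
end

section
/- Let r ≥ 2, 1 ≤ l_0 ≤ r-1, and suppose there exist constants Ĉ_0, ..., Ĉ_{l_0-1} ≥ 0 with ∑_{k=0}^{l_0-1} Ĉ_k = 1 and p_0^{l_0+r-1}(x_{i-1/2}) = ∑_{k=0}^{l_0-1} Ĉ_k p_k^r(x_{i-1/2}), where p_0^{l_0+r-1} is the Lagrange interpolant of f of degree l_0+r-1 on the smooth part of the stencil satisfying |p_0^{l_0+r-1}(x_{i-1/2}) - f(x_{i-1/2})| ≤ K₁ h^(r+l_0), and the interpolants satisfy |p_k^r(x_{i-1/2}) - f(x_{i-1/2})| ≤ K₂ h^(r+1) for 0 ≤ k ≤ l_0-1 and |p_k^r(x_{i-1/2})| ≤ M for all k. If the weights satisfy ω_k = Ĉ_k + O(h^(r-1)) for 0 ≤ k < l_0, ω_k = O(h^(2mt)) for l_0 ≤ k ≤ r-1, ∑ω_k = 1, and 2mt ≥ r + l_0, then |∑_{k=0}^{r-1} ω_k p_k^r(x_{i-1/2}) - f(x_{i-1/2})| = O(h^(r+l_0)).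 -/
/-- Theorem 6 (abstract form): if the high-order interpolant value `P h` is an
`Ĉ`-convex combination of the first `l₀` sub-stencil values `p k h` and approximates
`f(x_{i-1/2})` to order `r + l₀`, the smooth sub-stencil interpolants approximate to
order `r + 1`, all values are bounded, and the nonlinear weights satisfy
`ω_k = Ĉ_k + O(h^(r-1))` for `k < l₀`, `ω_k = O(h^(2mt))` for `l₀ ≤ k < r`, sum to one,
with `2mt ≥ r + l₀`, then the WENO combination attains order `r + l₀`. -/
theorem weno_accuracy_near_discontinuity (r l0 m t : ℕ) (hr : 2 ≤ r) (hl0 : 1 ≤ l0)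
    (hl0r : l0 ≤ r - 1) (hmt : r + l0 ≤ 2 * m * t)
    (K1 K2 M : ℝ) (hK1 : 0 ≤ K1) (hK2 : 0 ≤ K2) (hM : 0 ≤ M)
    (Ch : ℕ → ℝ) (hCnn : ∀ k, k < l0 → 0 ≤ Ch k) (hCsum : ∑ k ∈ Finset.range l0, Ch k = 1)
    (p : ℕ → ℝ → ℝ) (P : ℝ → ℝ) (fval : ℝ → ℝ) (ω : ℕ → ℝ → ℝ)
    (hP : ∀ h : ℝ, 0 < h → h ≤ 1 → P h = ∑ k ∈ Finset.range l0, Ch k * p k h)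
    (hPerr : ∀ h : ℝ, 0 < h → h ≤ 1 → |P h - fval h| ≤ K1 * h ^ (r + l0))
    (hperr : ∀ h : ℝ, 0 < h → h ≤ 1 → ∀ k, k < l0 → |p k h - fval h| ≤ K2 * h ^ (r + 1))
    (hpbd : ∀ h : ℝ, 0 < h → h ≤ 1 → ∀ k, k < r → |p k h| ≤ M)
    (hω1 : ∃ C1 : ℝ, ∀ h : ℝ, 0 < h → h ≤ 1 → ∀ k, k < l0 →
      |ω k h - Ch k| ≤ C1 * h ^ (r - 1))
    (hω2 : ∃ C2 : ℝ, ∀ h : ℝ, 0 < h → h ≤ 1 → ∀ k, l0 ≤ k → k < r →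
      |ω k h| ≤ C2 * h ^ (2 * m * t))
    (hωsum : ∀ h : ℝ, 0 < h → h ≤ 1 → ∑ k ∈ Finset.range r, ω k h = 1) :
    ∃ C : ℝ, ∀ h : ℝ, 0 < h → h ≤ 1 →
      |(∑ k ∈ Finset.range r, ω k h * p k h) - fval h| ≤ C * h ^ (r + l0) := by
  obtain ⟨C1, hC1⟩ := hω1
  obtain ⟨C2, hC2⟩ := hω2
  have hl0r' : l0 < r := lt_of_le_of_lt hl0r (Nat.sub_lt (by omega) one_pos)
  have hC1nn : 0 ≤ C1 := by
    have := hC1 1 one_pos le_rfl 0 (by omega)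
    simpa using le_trans (abs_nonneg _) this
  have hC2nn : 0 ≤ C2 := by
    have := hC2 1 one_pos le_rfl l0 le_rfl hl0r'
    simpa using le_trans (abs_nonneg _) this
  refine ⟨(l0 : ℝ) * (C1 * K2) + ((r - l0 : ℕ) : ℝ) * C2 * (M + K2) + K1
    + ((r - l0 : ℕ) : ℝ) * C2 * M, ?_⟩
  intro h h0 h1
  have hh0 : (0:ℝ) ≤ h := le_of_lt h0
  have hpow : ∀ n : ℕ, r + l0 ≤ n → h ^ n ≤ h ^ (r + l0) := fun n hn =>
    pow_le_pow_of_le_one hh0 h1 hn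
  have hpownn : ∀ n : ℕ, (0:ℝ) ≤ h ^ n := fun n => pow_nonneg hh0 n
  -- split the sum
  have hsplit : ∀ g : ℕ → ℝ, ∑ k ∈ Finset.range r, g k
      = (∑ k ∈ Finset.range l0, g k) + ∑ k ∈ Finset.Ico l0 r, g k := by
    intro g
    rw [Finset.range_eq_Ico, ← Finset.sum_Ico_consecutive _ (Nat.zero_le l0) (le_of_lt hl0r'),
      ← Finset.range_eq_Ico]
  -- tail weight sum
  have htail : ∑ k ∈ Finset.range l0, (ω k h - Ch k) = -(∑ k ∈ Finset.Ico l0 r, ω k h) := by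
    have h1' := hωsum h h0 h1
    rw [hsplit (fun k => ω k h)] at h1'
    rw [Finset.sum_sub_distrib, hCsum]
    linarith
  -- key algebraic identity
  have key : (∑ k ∈ Finset.range r, ω k h * p k h) - fval h
      = (∑ k ∈ Finset.range l0, (ω k h - Ch k) * (p k h - fval h))
        + (∑ k ∈ Finset.range l0, (ω k h - Ch k)) * fval h
        + (P h - fval h)
        + ∑ k ∈ Finset.Ico l0 r, ω k h * p k h := by
    rw [hsplit (fun k => ω k h * p k h), hP h h0 h1]
    have e1 : ∑ k ∈ Finset.range l0, (ω k h - Ch k) * (p k h - fval h)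
        = (∑ k ∈ Finset.range l0, ω k h * p k h)
          - (∑ k ∈ Finset.range l0, Ch k * p k h)
          - (∑ k ∈ Finset.range l0, (ω k h - Ch k)) * fval h := by
      simp only [sub_mul, mul_sub, Finset.sum_sub_distrib, Finset.sum_mul]
    rw [e1]
    ring
  rw [key]
  -- bound |fval h|
  have hf : |fval h| ≤ M + K2 := by
    have h2 := hpbd h h0 h1 0 (by omega)
    have h3 := hperr h h0 h1 0 (by omega)
    have h4 : |p 0 h - fval h| ≤ K2 := le_trans h3 (by
      calc K2 * h ^ (r + 1) ≤ K2 * 1 := by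
            apply mul_le_mul_of_nonneg_left _ hK2
            exact pow_le_one₀ hh0 h1
        _ = K2 := mul_one _)
    calc |fval h| = |p 0 h - (p 0 h - fval h)| := by ring_nf
      _ ≤ |p 0 h| + |p 0 h - fval h| := abs_sub _ _
      _ ≤ M + K2 := add_le_add h2 h4
  -- bound term A
  have hA : |∑ k ∈ Finset.range l0, (ω k h - Ch k) * (p k h - fval h)|
      ≤ (l0 : ℝ) * (C1 * K2) * h ^ (r + l0) := by
    calc |∑ k ∈ Finset.range l0, (ω k h - Ch k) * (p k h - fval h)|
        ≤ ∑ k ∈ Finset.range l0, |(ω k h - Ch k) * (p k h - fval h)| :=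
          Finset.abs_sum_le_sum_abs _ _
      _ ≤ ∑ k ∈ Finset.range l0, (C1 * h ^ (r - 1)) * (K2 * h ^ (r + 1)) := by
          apply Finset.sum_le_sum
          intro k hk
          rw [abs_mul]
          exact mul_le_mul (hC1 h h0 h1 k (Finset.mem_range.mp hk))
            (hperr h h0 h1 k (Finset.mem_range.mp hk)) (abs_nonneg _)
            (mul_nonneg hC1nn (hpownn _))
      _ = (l0 : ℝ) * ((C1 * K2) * h ^ (r - 1 + (r + 1))) := by
          rw [Finset.sum_const, Finset.card_range, nsmul_eq_mul, pow_add]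
          ring
      _ ≤ (l0 : ℝ) * ((C1 * K2) * h ^ (r + l0)) := by
          apply mul_le_mul_of_nonneg_left _ (Nat.cast_nonneg l0)
          apply mul_le_mul_of_nonneg_left _ (mul_nonneg hC1nn hK2)
          exact hpow _ (by omega)
      _ = (l0 : ℝ) * (C1 * K2) * h ^ (r + l0) := by ring
  -- bound tail weight sum
  have hT : |∑ k ∈ Finset.Ico l0 r, ω k h| ≤ ((r - l0 : ℕ) : ℝ) * C2 * h ^ (r + l0) := by
    calc |∑ k ∈ Finset.Ico l0 r, ω k h| ≤ ∑ k ∈ Finset.Ico l0 r, |ω k h| :=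
          Finset.abs_sum_le_sum_abs _ _
      _ ≤ ∑ k ∈ Finset.Ico l0 r, C2 * h ^ (2 * m * t) := by
          apply Finset.sum_le_sum
          intro k hk
          obtain ⟨hk1, hk2⟩ := Finset.mem_Ico.mp hk
          exact hC2 h h0 h1 k hk1 hk2
      _ = ((r - l0 : ℕ) : ℝ) * (C2 * h ^ (2 * m * t)) := by
          rw [Finset.sum_const, Nat.card_Ico, nsmul_eq_mul]
      _ ≤ ((r - l0 : ℕ) : ℝ) * (C2 * h ^ (r + l0)) := by
          apply mul_le_mul_of_nonneg_left _ (Nat.cast_nonneg _)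
          exact mul_le_mul_of_nonneg_left (hpow _ hmt) hC2nn
      _ = ((r - l0 : ℕ) : ℝ) * C2 * h ^ (r + l0) := by ring
  have hTnn : (0:ℝ) ≤ ((r - l0 : ℕ) : ℝ) * C2 * h ^ (r + l0) :=
    mul_nonneg (mul_nonneg (Nat.cast_nonneg _) hC2nn) (hpownn _)
  -- bound term B
  have hB : |(∑ k ∈ Finset.range l0, (ω k h - Ch k)) * fval h|
      ≤ ((r - l0 : ℕ) : ℝ) * C2 * (M + K2) * h ^ (r + l0) := by
    rw [abs_mul, htail, abs_neg]
    calc |∑ k ∈ Finset.Ico l0 r, ω k h| * |fval h|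
        ≤ (((r - l0 : ℕ) : ℝ) * C2 * h ^ (r + l0)) * (M + K2) :=
          mul_le_mul hT hf (abs_nonneg _) hTnn
      _ = ((r - l0 : ℕ) : ℝ) * C2 * (M + K2) * h ^ (r + l0) := by ring
  -- bound term D
  have hD : |∑ k ∈ Finset.Ico l0 r, ω k h * p k h|
      ≤ ((r - l0 : ℕ) : ℝ) * C2 * M * h ^ (r + l0) := by
    calc |∑ k ∈ Finset.Ico l0 r, ω k h * p k h|
        ≤ ∑ k ∈ Finset.Ico l0 r, |ω k h * p k h| := Finset.abs_sum_le_sum_abs _ _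
      _ ≤ ∑ k ∈ Finset.Ico l0 r, (C2 * h ^ (2 * m * t)) * M := by
          apply Finset.sum_le_sum
          intro k hk
          obtain ⟨hk1, hk2⟩ := Finset.mem_Ico.mp hk
          rw [abs_mul]
          exact mul_le_mul (hC2 h h0 h1 k hk1 hk2) (hpbd h h0 h1 k hk2) (abs_nonneg _)
            (mul_nonneg hC2nn (hpownn _))
      _ = ((r - l0 : ℕ) : ℝ) * ((C2 * h ^ (2 * m * t)) * M) := by
          rw [Finset.sum_const, Nat.card_Ico, nsmul_eq_mul]
      _ ≤ ((r - l0 : ℕ) : ℝ) * ((C2 * h ^ (r + l0)) * M) := by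
          apply mul_le_mul_of_nonneg_left _ (Nat.cast_nonneg _)
          exact mul_le_mul_of_nonneg_right
            (mul_le_mul_of_nonneg_left (hpow _ hmt) hC2nn) hM
      _ = ((r - l0 : ℕ) : ℝ) * C2 * M * h ^ (r + l0) := by ring
  have hPe := hPerr h h0 h1
  calc |(∑ k ∈ Finset.range l0, (ω k h - Ch k) * (p k h - fval h))
        + (∑ k ∈ Finset.range l0, (ω k h - Ch k)) * fval h
        + (P h - fval h)
        + ∑ k ∈ Finset.Ico l0 r, ω k h * p k h|
      ≤ |∑ k ∈ Finset.range l0, (ω k h - Ch k) * (p k h - fval h)|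
        + |(∑ k ∈ Finset.range l0, (ω k h - Ch k)) * fval h|
        + |P h - fval h|
        + |∑ k ∈ Finset.Ico l0 r, ω k h * p k h| := by
        apply le_trans (abs_add_le _ _)
        gcongr
        apply le_trans (abs_add_le _ _)
        gcongr
        exact abs_add_le _ _
    _ ≤ (l0 : ℝ) * (C1 * K2) * h ^ (r + l0)
        + ((r - l0 : ℕ) : ℝ) * C2 * (M + K2) * h ^ (r + l0)
        + K1 * h ^ (r + l0)
        + ((r - l0 : ℕ) : ℝ) * C2 * M * h ^ (r + l0) := by
        exact add_le_add (add_le_add (add_le_add hA hB) hPe) hD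
    _ = ((l0 : ℝ) * (C1 * K2) + ((r - l0 : ℕ) : ℝ) * C2 * (M + K2) + K1
        + ((r - l0 : ℕ) : ℝ) * C2 * M) * h ^ (r + l0) := by ring
end

section
/- Let r ≥ 2, 1 ≤ l_0 ≤ r-1, and let Ĉ_k^r (0 ≤ k ≤ l_0-1) be defined by the identity p_0^{l_0+r-1}(x_{i-1/2}) = ∑_{k=0}^{l_0-1} Ĉ_k^r · p_k^r(x_{i-1/2}) for Lagrange interpolation on the uniform-grid stencil {x_{i-r}, ..., x_{i+l_0-1}}, where p_k^r uses nodes {x_{i-r+k}, ..., x_{i+k}}. Then Ĉ_k^r > 0 for all 0 ≤ k ≤ l_0-1 and ∑_{k=0}^{l_0-1} Ĉ_k^r = 1. -/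
/-!
Neville's recursion writes the value at `z` of the interpolant on the stencil `[s, t]` as
`(z - x_s)/(x_t - x_s)` times the one on `[s + 1, t]` plus `(x_t - z)/(x_t - x_s)` times the one
on `[s, t - 1]`; when `x_s < z < x_t` this is a convex combination with positive weights.
Unfolding it from the full stencil down to the stencils with `r + 1` nodes writes the interpolant
as a positive combination of the `p_k^r` with weights summing to one. These weights are the
`Ĉ_k^r`, because the combination is unique: testing on data supported at the left end of the
`k`-th stencil gives a triangular system whose diagonal entries, Lagrange basis polynomials at a
non-node, are nonzero.
-/

open Lagrange Polynomial Finset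

namespace Polynomial

variable {K M : Type*} [Field K] [AddCommGroup M] [Module K M]

/-- The weights of a combination of `Q 0, Q 1, …` are stored as the coefficients of a polynomial,
so that shifting the family becomes multiplication by `X` and the total weight is `eval 1`. -/
def weightedSum (Q : ℕ → M) : K[X] →ₗ[K] M :=
  lsum fun k => LinearMap.toSpanSingleton K M (Q k)

theorem weightedSum_X_mul (Q : ℕ → M) (p : K[X]) :
    weightedSum Q (X * p) = weightedSum (fun k => Q (k + 1)) p := by
  suffices (weightedSum Q).comp (LinearMap.mulLeft K X) = weightedSum (fun k => Q (k + 1)) from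
    LinearMap.congr_fun this p
  ext k : 1
  ext
  simp [weightedSum, X_mul_monomial]

theorem weightedSum_eq_sum_range (Q : ℕ → M) {p : K[X]} {n : ℕ} (hp : p.natDegree < n) :
    weightedSum Q p = ∑ k ∈ range n, p.coeff k • Q k := by
  simp only [weightedSum, lsum_apply, LinearMap.toSpanSingleton_apply]
  exact sum_over_range' p (f := fun k c => c • Q k) (fun _ => zero_smul K _) n hp

end Polynomial

theorem exists_pos_weights_of_mem_openSegment {K M : Type*} [Field K] [LinearOrder K]
    [IsStrictOrderedRing K] [AddCommGroup M] [Module K M] {P : ℤ → ℤ → M} {r : ℕ} (n : ℕ) (s : ℤ)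
    (hP : ∀ s' t', s ≤ s' → t' ≤ s + r + n → s' + r < t' →
      P s' t' ∈ openSegment K (P (s' + 1) t') (P s' (t' - 1))) :
    ∃ D : K[X], D.natDegree ≤ n ∧ (∀ k ≤ n, 0 < D.coeff k) ∧ D.eval 1 = 1 ∧
      P s (s + r + n) = weightedSum (fun k => P (s + k) (s + k + r)) D := by
  induction n generalizing s with
  | zero => exact ⟨1, by simp, by simp, by simp,
    by simp [weightedSum_eq_sum_range _ (show (1 : K[X]).natDegree < 1 by simp)]⟩
  | succ n ih =>
    obtain ⟨D₁, hdeg₁, hpos₁, hsum₁, hD₁⟩ :=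
      ih (s + 1) fun s' t' hs ht hst => hP s' t' (by omega) (by push_cast; omega) hst
    obtain ⟨D₂, hdeg₂, hpos₂, hsum₂, hD₂⟩ :=
      ih s fun s' t' hs ht hst => hP s' t' hs (by push_cast; omega) hst
    obtain ⟨α, β, hα, hβ, hαβ, hsplit⟩ := hP s (s + r + (n + 1 : ℕ)) le_rfl le_rfl (by omega)
    have hnonneg₂ : ∀ k, 0 ≤ D₂.coeff k := fun k => by
      rcases le_or_gt k n with hk | hk
      · exact (hpos₂ k hk).le
      · rw [coeff_eq_zero_of_natDegree_lt (hdeg₂.trans_lt hk)]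
    refine ⟨α • (X * D₁) + β • D₂, ?_, ?_, ?_, ?_⟩
    · refine natDegree_add_le_of_degree_le ((natDegree_smul_le _ _).trans ?_)
        ((natDegree_smul_le _ _).trans (by omega))
      exact (natDegree_mul_le).trans (by simp; omega)
    · rintro (_ | k) hk
      · simpa using mul_pos hβ (hpos₂ 0 (Nat.zero_le n))
      · simp only [coeff_add, coeff_smul, coeff_X_mul, smul_eq_mul]
        exact add_pos_of_pos_of_nonneg (mul_pos hα (hpos₁ k (by omega)))
          (mul_nonneg hβ.le (hnonneg₂ _))
    · simp [hsum₁, hsum₂, hαβ]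
    · rw [← hsplit, map_add, map_smul, map_smul, weightedSum_X_mul]
      have hshift : (fun k : ℕ => P (s + (k + 1 : ℕ)) (s + (k + 1 : ℕ) + r))
          = fun k : ℕ => P (s + 1 + k) (s + 1 + k + r) := by
        funext k; push_cast; ring_nf
      rw [hshift, ← hD₁, ← hD₂]
      congr 3 <;> push_cast <;> ring

theorem eq_zero_of_forall_sum_mul_eq_zero_of_triangular {R V : Type*} [Semiring R]
    [NoZeroDivisors R] {Q : ℕ → V → R} (e : ℕ → V) {n : ℕ} {c : ℕ → R}
    (hdiag : ∀ j < n, Q j (e j) ≠ 0) (hlower : ∀ j k, j < k → Q k (e j) = 0)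
    (h : ∀ v, ∑ k ∈ range n, c k * Q k (e v) = 0) : ∀ k < n, c k = 0 := by
  intro j
  induction j using Nat.strong_induction_on with
  | _ j ih =>
    intro hj
    have hsum := h j
    rw [sum_eq_single_of_mem j (mem_range.2 hj) fun k hk hkj => ?_] at hsum
    · exact (mul_eq_zero.1 hsum).resolve_right (hdiag j hj)
    · rcases hkj.lt_or_gt with hkj | hkj
      · rw [ih k hkj (mem_range.1 hk), zero_mul]
      · rw [hlower j k hkj, mul_zero]

namespace Lagrange

variable {K : Type*} [Field K]

theorem interpolate_single_of_notMem {ι : Type*} [DecidableEq ι] {S : Finset ι} (v : ι → K)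
    {p : ι} (hp : p ∉ S) (c : K) : interpolate S v (Pi.single p c) = 0 := by
  rw [interpolate_apply]
  exact sum_eq_zero fun j hj => by
    rw [Pi.single_eq_of_ne (ne_of_mem_of_not_mem hj hp), C_0, zero_mul]

theorem eval_interpolate_single_ne_zero {ι : Type*} [DecidableEq ι] {S : Finset ι} {v : ι → K}
    (hv : Set.InjOn v S) {p : ι} (hp : p ∈ S) {z : K} (hz : ∀ j ∈ S, z ≠ v j) {c : K}
    (hc : c ≠ 0) : (interpolate S v (Pi.single p c)).eval z ≠ 0 := by
  rw [interpolate_apply, sum_eq_single_of_mem p hp fun j _ hjp => by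
    rw [Pi.single_eq_of_ne hjp, C_0, zero_mul]]
  rw [Pi.single_eq_same, eval_mul, eval_C, eval_basis_not_at_node hp (hz p hp)]
  exact mul_ne_zero hc (mul_ne_zero (eval_nodal_not_at_node hz)
    (mul_ne_zero (nodalWeight_ne_zero hv hp) (inv_ne_zero (sub_ne_zero.2 (hz p hp)))))

theorem eval_interpolate_Icc {x : ℤ → K} (hx : Function.Injective x) (y : ℤ → K) (z : K)
    {s t : ℤ} (hst : s < t) :
    (interpolate (Icc s t) x y).eval z =
      (z - x s) / (x t - x s) * (interpolate (Icc (s + 1) t) x y).eval z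
        + (x t - z) / (x t - x s) * (interpolate (Icc s (t - 1)) x y).eval z := by
  have hne : x t - x s ≠ 0 := sub_ne_zero.2 (hx.ne hst.ne')
  rw [interpolate_eq_add_interpolate_erase y hx.injOn
    (right_mem_Icc.2 hst.le) (left_mem_Icc.2 hst.le) hst.ne', Icc_erase_left, Icc_erase_right,
    ← Icc_add_one_left_eq_Ioc, ← Icc_sub_one_right_eq_Ico]
  simp only [eval_add, eval_mul, basisDivisor, eval_C, eval_sub, eval_X]
  rw [← neg_sub (x t) (x s), inv_neg]
  field_simp
  ring

theorem eq_zero_of_forall_sum_mul_eval_interpolate_eq_zero {x : ℤ → K}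
    (hx : Function.Injective x) {z : K} (hz : ∀ j, z ≠ x j) {r n : ℕ} {s : ℤ} {c : ℕ → K}
    (h : ∀ y, ∑ k ∈ range n, c k * (interpolate (Icc (s + k) (s + k + r)) x y).eval z = 0) :
    ∀ k < n, c k = 0 :=
  eq_zero_of_forall_sum_mul_eq_zero_of_triangular
    (Q := fun k y => (interpolate (Icc (s + k) (s + k + r)) x y).eval z)
    (fun j : ℕ => Pi.single (s + j) (1 : K))
    (fun j _ => eval_interpolate_single_ne_zero hx.injOn (by simp) (fun j _ => hz j) one_ne_zero)
    (fun j k hjk => by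
      rw [interpolate_single_of_notMem _ (by simp only [mem_Icc]; omega), eval_zero])
    (fun j => h _)

noncomputable def stencilEval (x : ℤ → K) (z : K) (s t : ℤ) : (ℤ → K) →ₗ[K] K :=
  (leval z).comp (interpolate (Icc s t) x)

variable [LinearOrder K] [IsStrictOrderedRing K]

theorem stencilEval_mem_openSegment {x : ℤ → K} (hx : StrictMono x) {z : K} {s t : ℤ}
    (hs : x s < z) (ht : z < x t) :
    stencilEval x z s t ∈
      openSegment K (stencilEval x z (s + 1) t) (stencilEval x z s (t - 1)) := by
  have hxst : 0 < x t - x s := sub_pos.2 (hs.trans ht)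
  refine ⟨(z - x s) / (x t - x s), (x t - z) / (x t - x s), div_pos (sub_pos.2 hs) hxst,
    div_pos (sub_pos.2 ht) hxst, by field_simp; ring, LinearMap.ext fun y => ?_⟩
  simp only [stencilEval, LinearMap.add_apply, LinearMap.smul_apply, LinearMap.comp_apply,
    leval_apply, smul_eq_mul]
  rw [eval_interpolate_Icc hx.injective y z (hx.lt_iff_lt.1 (hs.trans ht))]

/-- A substencil `[s', t']` with more than `r + 1` nodes has `s' ≤ s + n - 1` and `t' ≥ s + r + 1`,
so `hlo` and `hhi` put `z` strictly between its end nodes. -/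
theorem exists_pos_weights_eval_interpolate {x : ℤ → K} (hx : StrictMono x) {z : K} (r n : ℕ)
    (s : ℤ) (hlo : x (s + n - 1) < z) (hhi : z < x (s + r + 1)) :
    ∃ D : K[X], D.natDegree ≤ n ∧ (∀ k ≤ n, 0 < D.coeff k) ∧ D.eval 1 = 1 ∧
      ∀ y, (interpolate (Icc s (s + r + n)) x y).eval z
        = ∑ k ∈ range (n + 1), D.coeff k * (interpolate (Icc (s + k) (s + k + r)) x y).eval z := by
  obtain ⟨D, hdeg, hpos, hsum, hD⟩ :=
    exists_pos_weights_of_mem_openSegment (P := stencilEval x z) (r := r) n s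
      fun s' t' _ ht hst => stencilEval_mem_openSegment hx
        ((hx.monotone (by omega)).trans_lt hlo) (hhi.trans_le (hx.monotone (by omega)))
  refine ⟨D, hdeg, hpos, hsum, fun y => ?_⟩
  rw [weightedSum_eq_sum_range _ (Nat.lt_add_one_of_le hdeg)] at hD
  simpa only [stencilEval, LinearMap.comp_apply, leval_apply, LinearMap.sum_apply,
    LinearMap.smul_apply, smul_eq_mul] using LinearMap.congr_fun hD y


theorem pos_and_sum_eq_one_of_eval_interpolate_eq {x : ℤ → K} (hx : StrictMono x) {z : K}
    (hz : ∀ j, z ≠ x j) (r n : ℕ) (s : ℤ) (hlo : x (s + n - 1) < z) (hhi : z < x (s + r + 1))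
    {c : ℕ → K}
    (hc : ∀ y, (interpolate (Icc s (s + r + n)) x y).eval z
      = ∑ k ∈ range (n + 1), c k * (interpolate (Icc (s + k) (s + k + r)) x y).eval z) :
    (∀ k ≤ n, 0 < c k) ∧ ∑ k ∈ range (n + 1), c k = 1 := by
  obtain ⟨D, hdeg, hpos, hsum, hD⟩ := exists_pos_weights_eval_interpolate hx r n s hlo hhi
  have hzero : ∀ y, ∑ k ∈ range (n + 1),
      (c k - D.coeff k) * (interpolate (Icc (s + k) (s + k + r)) x y).eval z = 0 := by
    intro y
    simp only [sub_mul, sum_sub_distrib, ← hc y, ← hD y, sub_self]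
  have hcD : ∀ k < n + 1, c k = D.coeff k := fun k hk =>
    sub_eq_zero.1 (eq_zero_of_forall_sum_mul_eval_interpolate_eq_zero hx.injective hz hzero k hk)
  refine ⟨fun k hk => hcD k (by omega) ▸ hpos k hk, ?_⟩
  rw [sum_congr rfl fun k hk => hcD k (mem_range.1 hk), ← hsum,
    eval_eq_sum_range' (n := n + 1) (by omega)]
  simp

end Lagrange

theorem grid_midpoint_ne_node {K : Type*} [Field K] [CharZero K] {h : K} (hh : h ≠ 0) (a : K)
    (i j : ℤ) : a + ((i : K) - 1 / 2) * h ≠ a + (j : K) * h := by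
  intro hij
  have hij' : ((i : K) - 1 / 2) = j := mul_right_cancel₀ hh (add_left_cancel hij)
  have : ((2 * i - 1 : ℤ) : K) = ((2 * j : ℤ) : K) := by push_cast; rw [← hij']; ring
  have : 2 * i - 1 = 2 * j := by exact_mod_cast this
  omega

theorem hatC_pos_sum_one_general (r l0 : ℕ) (hl0 : 1 ≤ l0) (hl0r : l0 ≤ r - 1)
    (a h : ℝ) (hh : 0 < h) (i : ℤ) (Ch : ℕ → ℝ)
    (hCh : ∀ f : ℝ → ℝ,
      let x : ℤ → ℝ := fun j => a + (j : ℝ) * h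
      let m : ℝ := a + ((i : ℝ) - 1 / 2) * h
      (Lagrange.interpolate (Finset.Icc (i - r) (i + l0 - 1)) x (fun j => f (x j))).eval m
        = ∑ k ∈ Finset.range l0, Ch k *
            (Lagrange.interpolate (Finset.Icc (i - r + k) (i + k)) x
              (fun j => f (x j))).eval m) :
    (∀ k, k < l0 → 0 < Ch k) ∧ ∑ k ∈ Finset.range l0, Ch k = 1 := by
  set x : ℤ → ℝ := fun j => a + (j : ℝ) * h
  set m : ℝ := a + ((i : ℝ) - 1 / 2) * h
  have hx : StrictMono x := fun p q hpq => by simp only [x]; gcongr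
  have hlo : x (i - r + (l0 - 1 : ℕ) - 1) < m := by
    have hj : ((i - r + (l0 - 1 : ℕ) - 1 : ℤ) : ℝ) ≤ i - 1 := by
      exact_mod_cast (by omega : i - r + (l0 - 1 : ℕ) - 1 ≤ i - 1)
    simp only [x, m]; nlinarith
  have hhi : m < x (i - r + r + 1) := by simp only [x, m]; push_cast; nlinarith
  have hCh' : ∀ y : ℤ → ℝ, (interpolate (Icc (i - r) (i - r + r + (l0 - 1 : ℕ))) x y).eval m
      = ∑ k ∈ range (l0 - 1 + 1), Ch k *
          (interpolate (Icc (i - r + k) (i - r + k + r)) x y).eval m := by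
    intro y
    have hCh_y := hCh (Function.extend x y 0)
    simp only [funext (hx.injective.extend_apply y 0)] at hCh_y
    rw [Nat.sub_add_cancel hl0, show i - r + r + (l0 - 1 : ℕ) = i + l0 - 1 by omega]
    simpa only [sub_add_cancel, add_right_comm _ _ (r : ℤ)] using hCh_y
  obtain ⟨hpos, hsum⟩ := pos_and_sum_eq_one_of_eval_interpolate_eq hx
    (grid_midpoint_ne_node hh.ne' a i) r (l0 - 1) (i - r) hlo hhi hCh'
  rw [Nat.sub_add_cancel hl0] at hsum
  exact ⟨fun k hk => hpos k (by omega), hsum⟩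

/-- The coefficients `Ĉ_k^r` expressing the midpoint value of the Lagrange interpolant
of degree `l₀ + r - 1` on the stencil `{x_{i-r}, …, x_{i+l₀-1}}` (uniform grid
`x_j = a + j h`) as a combination of the midpoint values of the degree-`r` interpolants
`p_k^r` on `{x_{i-r+k}, …, x_{i+k}}`, for every `f`, are positive and sum to one. -/
theorem hatC_pos_sum_one (r l0 : ℕ) (hr : 2 ≤ r) (hl0 : 1 ≤ l0) (hl0r : l0 ≤ r - 1)
    (a h : ℝ) (hh : 0 < h) (i : ℤ) (Ch : ℕ → ℝ)
    (hCh : ∀ f : ℝ → ℝ,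
      let x : ℤ → ℝ := fun j => a + (j : ℝ) * h
      let m : ℝ := a + ((i : ℝ) - 1 / 2) * h
      (Lagrange.interpolate (Finset.Icc (i - r) (i + l0 - 1)) x (fun j => f (x j))).eval m
        = ∑ k ∈ Finset.range l0, Ch k *
            (Lagrange.interpolate (Finset.Icc (i - r + k) (i + k)) x
              (fun j => f (x j))).eval m) :
    (∀ k, k < l0 → 0 < Ch k) ∧ ∑ k ∈ Finset.range l0, Ch k = 1 :=
  hatC_pos_sum_one_general r l0 hl0 hl0r a h hh i Ch hCh
end
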